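/- arXiv:2304.12597 — 6 statements merged into one kernel-verified Lean document; each statement's English description precedes it below -/
import Mathlib

section
/- Let K ∈ ℝ^{n̄×n̄} be symmetric positive definite and let τ > 0. Then for every i = 1,…,ℓ the matrix (1−π_i)·I_{n̄} + τ·K is invertible, and for every ℓ ≥ 1 the matrix J_ℓ = I_{n̄} + Σ_{i=1}^ℓ γ_i·((1−π_i)·I_{n̄} + τ·K)^{−1} is Hermitian positive definite, i.e. J_ℓ^* = J_ℓ and z^* J_ℓ z > 0 for every nonzero z ∈ ℂ^{n̄}. -/
open Matrix
open scoped ComplexOrder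

section AuxParadiag

open Finset

lemma aux_scalar_sum (ℓ : ℕ) (hℓ : 0 < ℓ) (ω : ℂ) (hprim : IsPrimitiveRoot ω ℓ)
    (x : ℂ) (hx : ∀ i : Fin ℓ, x - ω ^ (i : ℕ) ≠ 0) (hx1 : x ^ ℓ - 1 ≠ 0) :
    ∑ i : Fin ℓ, (ω ^ (i : ℕ) / ℓ) * (x - ω ^ (i : ℕ))⁻¹ = (x ^ ℓ - 1)⁻¹ := by
  have hω1 : ω ^ ℓ = 1 := hprim.pow_eq_one
  have hℓ0 : (ℓ : ℂ) ≠ 0 := Nat.cast_ne_zero.mpr hℓ.ne'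
  have hinv : ∀ i : Fin ℓ, (x - ω ^ (i : ℕ))⁻¹
      = (∑ k ∈ range ℓ, x ^ k * (ω ^ (i : ℕ)) ^ (ℓ - 1 - k)) * (x ^ ℓ - 1)⁻¹ := by
    intro i
    have h := geom_sum₂_mul x (ω ^ (i : ℕ)) ℓ
    have h2 : (ω ^ (i : ℕ)) ^ ℓ = 1 := by
      rw [← pow_mul, mul_comm, pow_mul, hω1, one_pow]
    rw [h2] at h
    rw [eq_comm, mul_inv_eq_iff_eq_mul₀ hx1, eq_comm, inv_mul_eq_iff_eq_mul₀ (hx i)]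
    linear_combination -h
  calc ∑ i : Fin ℓ, (ω ^ (i : ℕ) / ℓ) * (x - ω ^ (i : ℕ))⁻¹
      = (↑ℓ)⁻¹ * (x ^ ℓ - 1)⁻¹ *
        ∑ i : Fin ℓ, ∑ k ∈ range ℓ, x ^ k * (ω ^ (ℓ - k)) ^ (i : ℕ) := by
        rw [Finset.mul_sum]
        refine Finset.sum_congr rfl fun i _ => ?_
        rw [hinv i, Finset.sum_mul, Finset.mul_sum, Finset.mul_sum]
        refine Finset.sum_congr rfl fun k hk => ?_
        have hk' : k < ℓ := mem_range.mp hk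
        have hsub : ℓ - 1 - k + 1 = ℓ - k := by omega
        have he : ω ^ (i : ℕ) * (ω ^ (i : ℕ)) ^ (ℓ - 1 - k) = (ω ^ (ℓ - k)) ^ (i : ℕ) := by
          rw [← pow_succ', ← pow_mul, mul_comm ((i:ℕ)), hsub, pow_mul]
        rw [div_eq_mul_inv, ← he]
        ring
      _ = (↑ℓ)⁻¹ * (x ^ ℓ - 1)⁻¹ * (↑ℓ) := by
        congr 1
        rw [Finset.sum_comm]
        rw [Finset.sum_eq_single 0]
        · simp [hω1, Finset.card_univ]
        · intro k hk hk0
          have hk' : k < ℓ := mem_range.mp hk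
          have hζ : (ω ^ (ℓ - k)) ≠ 1 := hprim.pow_ne_one_of_pos_of_lt (by omega) (by omega)
          have hζℓ : (ω ^ (ℓ - k)) ^ ℓ = 1 := by
            rw [← pow_mul, mul_comm, pow_mul, hω1, one_pow]
          rw [← Finset.mul_sum, Fin.sum_univ_eq_sum_range (fun j => (ω ^ (ℓ - k)) ^ j)]
          rw [geom_sum_eq hζ, hζℓ]
          simp
        · intro h; simp at h; omega
      _ = (x ^ ℓ - 1)⁻¹ := by field_simp

lemma posDef_map_ofReal {n : ℕ} {K : Matrix (Fin n) (Fin n) ℝ} (hK : K.PosDef) :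
    (K.map (Complex.ofReal)).PosDef := by
  refine Matrix.PosDef.of_dotProduct_mulVec_pos (hK.1.map _ (fun a => by simp [Complex.conj_ofReal])) fun z hz => ?_
  set M := K.map (Complex.ofReal) with hM
  set x : Fin n → ℝ := fun i => (z i).re with hxdef
  set y : Fin n → ℝ := fun i => (z i).im with hydef
  set cx : Fin n → ℂ := fun i => ((x i : ℝ) : ℂ) with hcx
  set cy : Fin n → ℂ := fun i => ((y i : ℝ) : ℂ) with hcy
  have hzeq : z = cx + Complex.I • cy := by
    funext i
    simp only [hcx, hcy, Pi.add_apply, Pi.smul_apply, smul_eq_mul]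
    rw [← Complex.re_add_im (z i)]; ring
  have hstarz : star z = cx - Complex.I • cy := by
    funext i
    simp only [hcx, hcy, Pi.star_apply, Pi.sub_apply, Pi.smul_apply, smul_eq_mul]
    rw [← Complex.re_add_im (z i)]
    simp [Complex.ext_iff, hxdef, hydef]
  have hMv : ∀ v : Fin n → ℝ, M *ᵥ (fun i => ((v i : ℝ) : ℂ)) = fun i => (((K *ᵥ v) i : ℝ) : ℂ) := by
    intro v; funext i
    simp [hM, mulVec, dotProduct, map_apply]
  have hdot : ∀ u v : Fin n → ℝ,
      (fun i => ((u i : ℝ) : ℂ)) ⬝ᵥ (fun i => ((v i : ℝ) : ℂ)) = ((u ⬝ᵥ v : ℝ) : ℂ) := by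
    intro u v; simp [dotProduct]
  have hsymK : Kᵀ = K := hK.1
  have hxy : x ⬝ᵥ K *ᵥ y = y ⬝ᵥ K *ᵥ x := by
    rw [Matrix.dotProduct_mulVec]
    nth_rewrite 1 [← hsymK]
    rw [Matrix.vecMul_transpose, dotProduct_comm]
  have key : star z ⬝ᵥ M *ᵥ z = (((x ⬝ᵥ K *ᵥ x + y ⬝ᵥ K *ᵥ y : ℝ)) : ℂ) := by
    rw [hstarz]
    conv_lhs => rw [hzeq]
    rw [mulVec_add, mulVec_smul, hcx, hcy, hMv, hMv]
    rw [sub_dotProduct, dotProduct_add, dotProduct_add, smul_dotProduct, smul_dotProduct,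
      dotProduct_smul, dotProduct_smul, hdot, hdot]
    rw [hdot, hdot, hxy]
    simp only [smul_eq_mul]
    push_cast
    linear_combination (-((y ⬝ᵥ K *ᵥ y : ℝ) : ℂ)) * Complex.I_sq
  rw [key]
  have hx0 : x ≠ 0 ∨ y ≠ 0 := by
    by_contra h
    push_neg at h
    apply hz
    funext i
    have h1 : x i = 0 := congr_fun h.1 i
    have h2 : y i = 0 := congr_fun h.2 i
    exact Complex.ext h1 h2
  have hKx : ∀ v : Fin n → ℝ, 0 ≤ v ⬝ᵥ K *ᵥ v := by
    intro v
    simpa using hK.posSemidef.dotProduct_mulVec_nonneg v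
  have hKpos : ∀ v : Fin n → ℝ, v ≠ 0 → 0 < v ⬝ᵥ K *ᵥ v := by
    intro v hv
    simpa using hK.dotProduct_mulVec_pos hv
  rw [Complex.zero_lt_real]
  rcases hx0 with h | h
  · have := hKpos x h; have := hKx y; linarith
  · have := hKpos y h; have := hKx x; linarith

end AuxParadiag

/-- For `K` real SPD and `τ > 0`, each shifted matrix
`(1 - π i) • I + τ • K` is invertible, and
`J_ℓ = I + ∑ i, γ i • ((1 - π i) • I + τ • K)⁻¹` is Hermitian positive definite. -/
theorem paradiag_Jl_hermitian_posdef
    (nbar ℓ : ℕ) (hℓ : 1 ≤ ℓ)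
    (K : Matrix (Fin nbar) (Fin nbar) ℝ) (hK : K.PosDef)
    (τ : ℝ) (hτ : 0 < τ)
    (ω : ℂ) (hω : ω = Complex.exp (-(2 * Real.pi * Complex.I) / ℓ))
    (π : Fin ℓ → ℂ) (hπ : ∀ i, π i = ω ^ (i : ℕ))
    (γ : Fin ℓ → ℂ) (hγ : ∀ i, γ i = π i / ℓ)
    (Kc : Matrix (Fin nbar) (Fin nbar) ℂ) (hKc : Kc = K.map Complex.ofReal)
    (A : Fin ℓ → Matrix (Fin nbar) (Fin nbar) ℂ)
    (hA : ∀ i, A i = (1 - π i) • (1 : Matrix (Fin nbar) (Fin nbar) ℂ) + (τ : ℂ) • Kc)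
    (J : Matrix (Fin nbar) (Fin nbar) ℂ)
    (hJ : J = 1 + ∑ i, γ i • (A i)⁻¹) :
    (∀ i, IsUnit (A i)) ∧ Jᴴ = J ∧
      ∀ z : Fin nbar → ℂ, z ≠ 0 → 0 < star z ⬝ᵥ (J *ᵥ z) := by
  have hℓ0 : 0 < ℓ := hℓ
  have hℓC : (ℓ : ℂ) ≠ 0 := Nat.cast_ne_zero.mpr hℓ0.ne'
  -- ω is a primitive ℓ-th root of unity
  have hprim : IsPrimitiveRoot ω ℓ := by
    have h := Complex.isPrimitiveRoot_exp ℓ hℓ0.ne'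
    have heq : ω = (Complex.exp (2 * Real.pi * Complex.I / ℓ))⁻¹ := by
      rw [hω, ← Complex.exp_neg]
      ring_nf
    rw [heq]
    exact h.inv
  -- Kc is positive definite
  have hKcpd : Kc.PosDef := hKc ▸ posDef_map_ofReal hK
  have hKcH : Kc.IsHermitian := hKcpd.1
  set lam : Fin nbar → ℝ := hKcH.eigenvalues with hlam
  have hlampos : ∀ k, 0 < lam k := hKcpd.eigenvalues_pos
  set U : Matrix (Fin nbar) (Fin nbar) ℂ := (hKcH.eigenvectorUnitary : Matrix (Fin nbar) (Fin nbar) ℂ) with hUdef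
  have hU1 : U * star U = 1 := Matrix.mem_unitaryGroup_iff.mp hKcH.eigenvectorUnitary.2
  have hU2 : star U * U = 1 := Matrix.mem_unitaryGroup_iff'.mp hKcH.eigenvectorUnitary.2
  have hspec : Kc = U * Matrix.diagonal (fun k => ((lam k : ℝ) : ℂ)) * star U := by
    exact hKcH.spectral_theorem
  -- the shifted scalars
  set r : Fin nbar → ℝ := fun k => 1 + τ * lam k with hrdef
  have hr1 : ∀ k, 1 < r k := fun k => by
    have := mul_pos hτ (hlampos k); simp [hrdef]; linarith
  set d : Fin ℓ → Fin nbar → ℂ := fun i k => ((r k : ℝ) : ℂ) - ω ^ (i : ℕ) with hddef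
  have habsω : ‖ω‖ = 1 := by
    have h1 : ‖ω‖ ^ ℓ = 1 := by
      rw [← norm_pow, hprim.pow_eq_one]
      exact norm_one
    by_contra h
    rcases lt_or_gt_of_ne h with h' | h'
    · exact absurd h1 (ne_of_lt (pow_lt_one₀ (norm_nonneg ω) h' hℓ0.ne'))
    · exact absurd h1 (ne_of_gt (one_lt_pow₀ h' hℓ0.ne'))
  have hd0 : ∀ i k, d i k ≠ 0 := by
    intro i k h
    have h2 : (ω : ℂ) ^ (i : ℕ) = ((r k : ℝ) : ℂ) := by
      simp only [hddef] at h
      linear_combination -h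
    have h3 : ‖ω ^ (i : ℕ)‖ = r k := by
      rw [h2, Complex.norm_real, Real.norm_eq_abs, abs_of_pos (by linarith [hr1 k])]
    rw [norm_pow, habsω, one_pow] at h3
    linarith [hr1 k]
  -- diagonalization of each A i
  have hrc : ∀ i k, d i k = (1 - π i) + (τ : ℂ) * (lam k : ℂ) := by
    intro i k
    simp only [hddef, hπ, hrdef]
    push_cast
    ring
  have hAi : ∀ i, A i = U * Matrix.diagonal (d i) * star U := by
    intro i
    have hdiag : (1 - π i) • (1 : Matrix (Fin nbar) (Fin nbar) ℂ)
        + (τ : ℂ) • Matrix.diagonal (fun k => ((lam k : ℝ) : ℂ)) = Matrix.diagonal (d i) := by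
      ext j k
      by_cases h : j = k
      · subst h
        simp [Matrix.one_apply_eq, Matrix.diagonal_apply_eq, hrc i j]
      · simp [Matrix.one_apply_ne h, Matrix.diagonal_apply_ne _ h]
    have expand : ∀ (c : ℂ) (X : Matrix (Fin nbar) (Fin nbar) ℂ),
        U * (c • X) * star U = c • (U * X * star U) := by
      intro c X
      rw [Matrix.mul_smul, Matrix.smul_mul]
    rw [hA, hspec, ← hdiag, Matrix.mul_add, Matrix.add_mul, expand, expand, Matrix.mul_one, hU1]
  have hdetU : Matrix.det U * Matrix.det (star U) = 1 := by
    rw [← Matrix.det_mul, hU1, Matrix.det_one]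
  have hAunit : ∀ i, IsUnit (A i) := by
    intro i
    have hdet : (A i).det = (Matrix.diagonal (d i)).det := by
      rw [hAi, Matrix.det_mul, Matrix.det_mul, mul_comm (Matrix.det U), mul_assoc, hdetU,
        mul_one]
    refine (Matrix.isUnit_iff_isUnit_det _).mpr (isUnit_iff_ne_zero.mpr ?_)
    rw [hdet, Matrix.det_diagonal]
    exact Finset.prod_ne_zero_iff.mpr fun k _ => hd0 i k
  have hAinv : ∀ i, (A i)⁻¹ = U * Matrix.diagonal (fun k => (d i k)⁻¹) * star U := by
    intro i
    apply Matrix.inv_eq_right_inv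
    rw [hAi]
    have : U * Matrix.diagonal (d i) * star U * (U * Matrix.diagonal (fun k => (d i k)⁻¹) * star U)
        = U * (Matrix.diagonal (d i) * (star U * U * Matrix.diagonal (fun k => (d i k)⁻¹))) * star U := by
      simp only [Matrix.mul_assoc]
    rw [this, hU2, Matrix.one_mul, Matrix.diagonal_mul_diagonal]
    have : (fun k => d i k * (d i k)⁻¹) = fun _ : Fin nbar => (1 : ℂ) :=
      funext fun k => mul_inv_cancel₀ (hd0 i k)
    rw [this, Matrix.diagonal_one, Matrix.mul_one, hU1]
  -- diagonal form of J
  set s : Fin nbar → ℂ := fun k => 1 + ∑ i : Fin ℓ, γ i * (d i k)⁻¹ with hsdef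
  have hJU : J = U * Matrix.diagonal s * star U := by
    rw [hJ]
    have hsum : ∑ i : Fin ℓ, γ i • (A i)⁻¹
        = U * Matrix.diagonal (fun k => ∑ i : Fin ℓ, γ i * (d i k)⁻¹) * star U := by
      have h1 : ∀ i : Fin ℓ, γ i • (A i)⁻¹
          = U * Matrix.diagonal (fun k => γ i * (d i k)⁻¹) * star U := by
        intro i
        have hfun : (fun k => γ i * (d i k)⁻¹) = γ i • fun k => (d i k)⁻¹ := rfl
        rw [hAinv i, hfun, Matrix.diagonal_smul]
        simp only [Matrix.mul_smul, Matrix.smul_mul]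
      rw [Finset.sum_congr rfl fun i _ => h1 i, ← Finset.sum_mul, ← Finset.mul_sum]
      congr 2
      ext j k
      by_cases h : j = k
      · subst h
        simp [Matrix.sum_apply, Matrix.diagonal_apply_eq]
      · simp [Matrix.sum_apply, Matrix.diagonal_apply_ne _ h]
    rw [hsum]
    have hone : (1 : Matrix (Fin nbar) (Fin nbar) ℂ) = U * 1 * star U := by
      rw [Matrix.mul_one, hU1]
    rw [hone, ← Matrix.add_mul, ← Matrix.mul_add]
    congr 2
    ext j k
    by_cases h : j = k
    · subst h
      simp [Matrix.diagonal_apply_eq, hsdef, Matrix.one_apply_eq]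
    · simp [Matrix.diagonal_apply_ne _ h, Matrix.one_apply_ne h]
  -- the diagonal entries are real and positive
  have hs : ∀ k, s k = ((1 + ((r k) ^ ℓ - 1)⁻¹ : ℝ) : ℂ) := by
    intro k
    have hrpow : 1 < r k ^ ℓ := one_lt_pow₀ (hr1 k) hℓ0.ne'
    have hx1 : ((r k : ℝ) : ℂ) ^ ℓ - 1 ≠ 0 := by
      have : ((r k : ℝ) : ℂ) ^ ℓ - 1 = ((r k ^ ℓ - 1 : ℝ) : ℂ) := by push_cast; ring
      rw [this]
      exact_mod_cast Complex.ofReal_ne_zero.mpr (by linarith)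
    have hxne : ∀ i : Fin ℓ, ((r k : ℝ) : ℂ) - ω ^ (i : ℕ) ≠ 0 := fun i => hd0 i k
    have hsum := aux_scalar_sum ℓ hℓ0 ω hprim ((r k : ℝ) : ℂ) hxne hx1
    have hterm : ∀ i : Fin ℓ, γ i * (d i k)⁻¹ = (ω ^ (i : ℕ) / ℓ) * (((r k : ℝ) : ℂ) - ω ^ (i : ℕ))⁻¹ := by
      intro i
      rw [hγ, hπ, hddef]
    rw [hsdef]
    simp only [hterm]
    rw [hsum]
    push_cast
    ring
  have hspos : ∀ k, (0 : ℂ) < s k := by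
    intro k
    rw [hs k, Complex.zero_lt_real]
    have hrpow : 1 < r k ^ ℓ := one_lt_pow₀ (hr1 k) hℓ0.ne'
    have : 0 < (r k ^ ℓ - 1)⁻¹ := inv_pos.mpr (by linarith)
    linarith
  have hsreal : ∀ k, star (s k) = s k := by
    intro k
    rw [hs k]
    exact Complex.conj_ofReal _
  refine ⟨hAunit, ?_, ?_⟩
  · rw [hJU]
    rw [Matrix.conjTranspose_mul, Matrix.conjTranspose_mul, Matrix.diagonal_conjTranspose]
    rw [Matrix.star_eq_conjTranspose, Matrix.conjTranspose_conjTranspose]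
    have : star s = s := funext hsreal
    rw [this, ← Matrix.star_eq_conjTranspose, Matrix.mul_assoc]
  · intro z hz
    have hDpd : (Matrix.diagonal s).PosDef := Matrix.PosDef.diagonal hspos
    set w : Fin nbar → ℂ := star U *ᵥ z with hwdef
    have hw0 : w ≠ 0 := by
      intro h
      apply hz
      have : U *ᵥ w = z := by
        rw [hwdef, Matrix.mulVec_mulVec, hU1, Matrix.one_mulVec]
      rw [← this, h, Matrix.mulVec_zero]
    have hquad : star z ⬝ᵥ (J *ᵥ z) = star w ⬝ᵥ (Matrix.diagonal s *ᵥ w) := by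
      rw [hJU, ← Matrix.mulVec_mulVec, ← Matrix.mulVec_mulVec, Matrix.dotProduct_mulVec]
      congr 1
      rw [hwdef, Matrix.star_mulVec, Matrix.star_eq_conjTranspose,
        Matrix.conjTranspose_conjTranspose]
    rw [hquad]
    exact hDpd.dotProduct_mulVec_pos hw0
end

section
/- Let K ∈ ℝ^{n̄×n̄} and τ > 0 be such that (1−π_i)·I_{n̄} + τ·K is invertible for all i = 1,…,ℓ. Define P = I_ℓ ⊗ (I_{n̄} + τ·K) − Π_1 ⊗ I_{n̄} ∈ ℂ^{n̄ℓ×n̄ℓ} with Π_1 = diag(π_1,…,π_ℓ) (so P is block diagonal with i-th diagonal block (1−π_i)·I_{n̄} + τ·K, hence invertible), and define M = (F·e_1) ⊗ I_{n̄} ∈ ℂ^{n̄ℓ×n̄} and N = (F^{−T}·e_ℓ) ⊗ I_{n̄} ∈ ℂ^{n̄ℓ×n̄}, where F·e_1 and F^{−T}·e_ℓ are regarded as ℓ×1 matrices. Then N^T·P^{−1}·M = Σ_{i=1}^ℓ γ_i·((1−π_i)·I_{n̄} + τ·K)^{−1}. -/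
/-!
`P` is, after swapping the two factors of its index type, the block-diagonal matrix with blocks
`A i`, so `P⁻¹` is block diagonal with blocks `(A i)⁻¹`. Both `M` and `N` have the form `v ⊗ I`, and
sandwiching a block-diagonal matrix between `(v ⊗ I)ᵀ` and `w ⊗ I` gives `∑ i, v i w i • Bᵢ`.
Here `w = F e₁` is the all-ones vector, and `v = F⁻ᵀ e_ℓ` is the last row of
`F⁻¹ = ℓ⁻¹ conj F`, i.e. `ω^{-(ℓ-1)i} / ℓ = ω^i / ℓ = γ i`.
-/

open Matrix
open scoped Kronecker

section DiscreteFourier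

variable {K : Type*} [Field K] {ζ : K} {ℓ : ℕ}

theorem IsPrimitiveRoot.sum_pow_mul_inv_pow (hζ : IsPrimitiveRoot ζ ℓ) (j k : Fin ℓ) :
    ∑ i : Fin ℓ, ζ ^ ((j : ℕ) * i) * ζ⁻¹ ^ ((i : ℕ) * k) = if j = k then (ℓ : K) else 0 := by
  have hζ0 : ζ ≠ 0 := hζ.ne_zero j.pos.ne'
  set x := ζ ^ (j : ℕ) * ζ⁻¹ ^ (k : ℕ)
  have hterm (i : Fin ℓ) : ζ ^ ((j : ℕ) * i) * ζ⁻¹ ^ ((i : ℕ) * k) = x ^ (i : ℕ) := by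
    rw [mul_pow, ← pow_mul, ← pow_mul, mul_comm (k : ℕ)]
  simp only [hterm, Fin.sum_univ_eq_sum_range (x ^ ·)]
  split_ifs with hjk
  · subst hjk
    simp [x, hζ0]
  · have hx : x ≠ 1 := fun hx ↦ hjk <| Fin.ext <| hζ.pow_inj j.isLt k.isLt <|
      (mul_inv_eq_one₀ (pow_ne_zero _ hζ0)).mp (by simpa [x, inv_pow] using hx)
    have hxℓ : x ^ ℓ = 1 := by
      rw [mul_pow, ← pow_mul, ← pow_mul, mul_comm _ ℓ, mul_comm _ ℓ, pow_mul, pow_mul,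
        hζ.pow_eq_one, hζ.inv.pow_eq_one, one_pow, one_pow, one_mul]
    rw [geom_sum_eq hx, hxℓ, sub_self, zero_div]

variable [NeZero ℓ]

theorem IsPrimitiveRoot.inv_of_pow_mul (hζ : IsPrimitiveRoot ζ ℓ) :
    (of fun j k : Fin ℓ ↦ ζ ^ ((j : ℕ) * k))⁻¹ =
      (ℓ : K)⁻¹ • of fun j k : Fin ℓ ↦ ζ⁻¹ ^ ((j : ℕ) * k) := by
  have := hζ.neZero'
  refine inv_eq_right_inv ?_
  ext j k
  rw [Matrix.mul_smul, Matrix.smul_apply, mul_apply]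
  simp only [of_apply, hζ.sum_pow_mul_inv_pow, one_apply]
  split_ifs <;> simp [NeZero.ne]

theorem IsPrimitiveRoot.inv_of_pow_mul_apply_last (hζ : IsPrimitiveRoot ζ ℓ) {last : Fin ℓ}
    (hlast : (last : ℕ) = ℓ - 1) (i : Fin ℓ) :
    (of fun j k : Fin ℓ ↦ ζ ^ ((j : ℕ) * k))⁻¹ last i = ζ ^ (i : ℕ) / ℓ := by
  have hζ_inv : ζ⁻¹ ^ (ℓ - 1) = ζ := by
    rw [inv_pow, pow_sub₀ _ (hζ.ne_zero (NeZero.ne ℓ)) NeZero.one_le, hζ.pow_eq_one, one_mul,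
      pow_one, inv_inv]
  rw [hζ.inv_of_pow_mul, Matrix.smul_apply, of_apply, hlast, pow_mul, hζ_inv, smul_eq_mul,
    inv_mul_eq_div]

end DiscreteFourier

namespace Matrix

variable {ι n R : Type*} [DecidableEq ι] [DecidableEq n] [CommRing R]

theorem one_kronecker_sub_diagonal_kronecker_one (B : Matrix n n R) (d : ι → R) :
    (1 : Matrix ι ι R) ⊗ₖ B - diagonal d ⊗ₖ (1 : Matrix n n R) =
      (blockDiagonal fun i ↦ B - d i • 1).submatrix Prod.swap Prod.swap := by
  ext ⟨i, a⟩ ⟨j, b⟩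
  by_cases hij : i = j
  · subst hij
    simp [blockDiagonal_apply, one_apply]
  · simp [blockDiagonal_apply, one_apply, hij]

variable (n) in
/-- `v ⊗ₖ 1` for `v` read as a column, with the resulting `Unit` factor of the column index
dropped. -/
def vecKroneckerOne (v : ι → R) : Matrix (ι × n) n R :=
  of fun p b ↦ v p.1 * (1 : Matrix n n R) p.2 b

variable [Fintype ι] [Fintype n]

theorem inv_blockDiagonal (A : ι → Matrix n n R) (hA : ∀ i, IsUnit (A i)) :
    (blockDiagonal A)⁻¹ = blockDiagonal fun i ↦ (A i)⁻¹ := by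
  refine inv_eq_right_inv ?_
  rw [← blockDiagonal_mul, ← blockDiagonal_one]
  congr 1
  ext1 i
  exact mul_nonsing_inv _ ((isUnit_iff_isUnit_det _).mp (hA i))

theorem vecKroneckerOne_transpose_mul_blockDiagonal_mul (v w : ι → R) (B : ι → Matrix n n R) :
    (vecKroneckerOne n v)ᵀ * (blockDiagonal B).submatrix Prod.swap Prod.swap *
      vecKroneckerOne n w = ∑ i, (v i * w i) • B i := by
  ext a b
  simp [vecKroneckerOne, mul_apply, Fintype.sum_prod_type, blockDiagonal_apply, one_apply,
    sum_apply, mul_right_comm _ (B _ a b)]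

end Matrix

theorem paradiag_NtPinvM_general
    (nbar ℓ : ℕ) [NeZero ℓ]
    (ω : ℂ) (hω : ω = Complex.exp (-(2 * Real.pi * Complex.I) / ℓ))
    (π : Fin ℓ → ℂ) (hπ : ∀ i, π i = ω ^ (i : ℕ))
    (γ : Fin ℓ → ℂ) (hγ : ∀ i, γ i = π i / ℓ)
    (F : Matrix (Fin ℓ) (Fin ℓ) ℂ)
    (hF : ∀ j k : Fin ℓ, F j k = ω ^ ((j : ℕ) * (k : ℕ)))
    (eL : Fin ℓ) (heL : (eL : ℕ) = ℓ - 1)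
    (τ : ℝ)
    (Kc : Matrix (Fin nbar) (Fin nbar) ℂ)
    (A : Fin ℓ → Matrix (Fin nbar) (Fin nbar) ℂ)
    (hA : ∀ i, A i = (1 - π i) • (1 : Matrix (Fin nbar) (Fin nbar) ℂ) + (τ : ℂ) • Kc)
    (hAu : ∀ i, IsUnit (A i))
    (P : Matrix (Fin ℓ × Fin nbar) (Fin ℓ × Fin nbar) ℂ)
    (hP : P = (1 : Matrix (Fin ℓ) (Fin ℓ) ℂ) ⊗ₖ
        ((1 : Matrix (Fin nbar) (Fin nbar) ℂ) + (τ : ℂ) • Kc) -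
        (Matrix.diagonal π) ⊗ₖ (1 : Matrix (Fin nbar) (Fin nbar) ℂ))
    (M N : Matrix (Fin ℓ × Fin nbar) (Fin nbar) ℂ)
    (hM : ∀ (p : Fin ℓ × Fin nbar) (b : Fin nbar),
      M p b = (F *ᵥ Pi.single (0 : Fin ℓ) 1) p.1 * (1 : Matrix (Fin nbar) (Fin nbar) ℂ) p.2 b)
    (hN : ∀ (p : Fin ℓ × Fin nbar) (b : Fin nbar),
      N p b = ((F⁻¹)ᵀ *ᵥ Pi.single eL 1) p.1 * (1 : Matrix (Fin nbar) (Fin nbar) ℂ) p.2 b) :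
    Nᵀ * P⁻¹ * M = ∑ i, γ i • (A i)⁻¹ := by
  have hω_prim : IsPrimitiveRoot ω ℓ := by
    rw [hω, neg_div, Complex.exp_neg]
    exact (Complex.isPrimitiveRoot_exp ℓ (NeZero.ne ℓ)).inv
  have hF_eq : F = of fun j k : Fin ℓ ↦ ω ^ ((j : ℕ) * k) := Matrix.ext hF
  have hM_eq : M = vecKroneckerOne (Fin nbar) fun _ ↦ 1 := by
    ext p b
    simp [hM, hF_eq, vecKroneckerOne]
  have hN_eq : N = vecKroneckerOne (Fin nbar) γ := by
    ext p b
    simp [hN, hF_eq, vecKroneckerOne, hω_prim.inv_of_pow_mul_apply_last heL, hγ, hπ]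
  have hP_eq : P = (blockDiagonal A).submatrix (Equiv.prodComm _ _) (Equiv.prodComm _ _) := by
    rw [hP, Equiv.coe_prodComm, one_kronecker_sub_diagonal_kronecker_one]
    congr
    ext1 i
    rw [hA]
    module
  rw [hP_eq, inv_submatrix_equiv, inv_blockDiagonal A hAu, Equiv.coe_prodComm, hM_eq, hN_eq,
    vecKroneckerOne_transpose_mul_blockDiagonal_mul]
  simp only [mul_one]

/-- `Nᵀ P⁻¹ M = ∑ i, γ i • ((1 - π i) I + τ K)⁻¹`. -/
theorem paradiag_NtPinvM
    (nbar ℓ : ℕ) [NeZero ℓ]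
    (ω : ℂ) (hω : ω = Complex.exp (-(2 * Real.pi * Complex.I) / ℓ))
    (π : Fin ℓ → ℂ) (hπ : ∀ i, π i = ω ^ (i : ℕ))
    (γ : Fin ℓ → ℂ) (hγ : ∀ i, γ i = π i / ℓ)
    (F : Matrix (Fin ℓ) (Fin ℓ) ℂ)
    (hF : ∀ j k : Fin ℓ, F j k = ω ^ ((j : ℕ) * (k : ℕ)))
    (eL : Fin ℓ) (heL : (eL : ℕ) = ℓ - 1)
    (K : Matrix (Fin nbar) (Fin nbar) ℝ) (τ : ℝ) (hτ : 0 < τ)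
    (Kc : Matrix (Fin nbar) (Fin nbar) ℂ) (hKc : Kc = K.map Complex.ofReal)
    (A : Fin ℓ → Matrix (Fin nbar) (Fin nbar) ℂ)
    (hA : ∀ i, A i = (1 - π i) • (1 : Matrix (Fin nbar) (Fin nbar) ℂ) + (τ : ℂ) • Kc)
    (hAu : ∀ i, IsUnit (A i))
    (P : Matrix (Fin ℓ × Fin nbar) (Fin ℓ × Fin nbar) ℂ)
    (hP : P = (1 : Matrix (Fin ℓ) (Fin ℓ) ℂ) ⊗ₖ
        ((1 : Matrix (Fin nbar) (Fin nbar) ℂ) + (τ : ℂ) • Kc) -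
        (Matrix.diagonal π) ⊗ₖ (1 : Matrix (Fin nbar) (Fin nbar) ℂ))
    (M N : Matrix (Fin ℓ × Fin nbar) (Fin nbar) ℂ)
    (hM : ∀ (p : Fin ℓ × Fin nbar) (b : Fin nbar),
      M p b = (F *ᵥ Pi.single (0 : Fin ℓ) 1) p.1 * (1 : Matrix (Fin nbar) (Fin nbar) ℂ) p.2 b)
    (hN : ∀ (p : Fin ℓ × Fin nbar) (b : Fin nbar),
      N p b = ((F⁻¹)ᵀ *ᵥ Pi.single eL 1) p.1 * (1 : Matrix (Fin nbar) (Fin nbar) ℂ) p.2 b) :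
    Nᵀ * P⁻¹ * M = ∑ i, γ i • (A i)⁻¹ :=
  paradiag_NtPinvM_general nbar ℓ ω hω π hπ γ hγ F hF eL heL τ Kc A hA hAu P hP M N hM hN
end

section
/- (Correctness of the ParaDiag algorithm with backward Euler.) Let K ∈ ℝ^{n̄×n̄}, τ > 0, and G ∈ ℝ^{n̄×ℓ}, and assume that (1−π_i)·I_{n̄} + τ·K is invertible for all i = 1,…,ℓ and that J_ℓ = I_{n̄} + Σ_{i=1}^ℓ γ_i·((1−π_i)·I_{n̄} + τ·K)^{−1} is invertible. Define L ∈ ℂ^{n̄×ℓ} column-wise by L·e_i = ((1−π_i)·I_{n̄} + τ·K)^{−1}·G·F^T·e_i, set b = L·F^{−T}·e_ℓ, x = J_ℓ^{−1}·b, define W ∈ ℂ^{n̄×ℓ} column-wise by W·e_i = ((1−π_i)·I_{n̄} + τ·K)^{−1}·x, and set U = (L − W)·F^{−T}. Then (I_{n̄} + τ·K)·U − U·Σ_1^T = G, where Σ_1 ∈ ℝ^{ℓ×ℓ} is the matrix with ones on the first subdiagonal and zeros elsewhere. -/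
open Matrix

/-- correctness of the new ParaDiag algorithm with backward Euler:
the computed `U = (L - W) F⁻ᵀ` satisfies `(I + τK) U - U Σ₁ᵀ = G`. -/
theorem paradiag_backward_euler_correct
    (nbar ℓ : ℕ) [NeZero ℓ]
    (ω : ℂ) (hω : ω = Complex.exp (-(2 * Real.pi * Complex.I) / ℓ))
    (π : Fin ℓ → ℂ) (hπ : ∀ i, π i = ω ^ (i : ℕ))
    (γ : Fin ℓ → ℂ) (hγ : ∀ i, γ i = π i / ℓ)
    (F : Matrix (Fin ℓ) (Fin ℓ) ℂ)
    (hF : ∀ j k : Fin ℓ, F j k = ω ^ ((j : ℕ) * (k : ℕ)))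
    (eL : Fin ℓ) (heL : (eL : ℕ) = ℓ - 1)
    (K : Matrix (Fin nbar) (Fin nbar) ℝ) (τ : ℝ) (hτ : 0 < τ)
    (Kc : Matrix (Fin nbar) (Fin nbar) ℂ) (hKc : Kc = K.map Complex.ofReal)
    (G : Matrix (Fin nbar) (Fin ℓ) ℝ)
    (Gc : Matrix (Fin nbar) (Fin ℓ) ℂ) (hGc : Gc = G.map Complex.ofReal)
    (A : Fin ℓ → Matrix (Fin nbar) (Fin nbar) ℂ)
    (hA : ∀ i, A i = (1 - π i) • (1 : Matrix (Fin nbar) (Fin nbar) ℂ) + (τ : ℂ) • Kc)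
    (hAu : ∀ i, IsUnit (A i))
    (J : Matrix (Fin nbar) (Fin nbar) ℂ)
    (hJ : J = 1 + ∑ i, γ i • (A i)⁻¹)
    (hJu : IsUnit J)
    (L : Matrix (Fin nbar) (Fin ℓ) ℂ)
    (hL : ∀ (i : Fin ℓ) (a : Fin nbar), L a i = ((A i)⁻¹ * (Gc * Fᵀ)) a i)
    (bvec : Fin nbar → ℂ)
    (hb : bvec = (L * (F⁻¹)ᵀ) *ᵥ Pi.single eL 1)
    (x : Fin nbar → ℂ) (hx : x = J⁻¹ *ᵥ bvec)
    (W : Matrix (Fin nbar) (Fin ℓ) ℂ)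
    (hW : ∀ (i : Fin ℓ) (a : Fin nbar), W a i = ((A i)⁻¹ *ᵥ x) a)
    (U : Matrix (Fin nbar) (Fin ℓ) ℂ)
    (hU : U = (L - W) * (F⁻¹)ᵀ)
    (Sg : Matrix (Fin ℓ) (Fin ℓ) ℂ)
    (hSg : ∀ j k : Fin ℓ, Sg j k = if (j : ℕ) = (k : ℕ) + 1 then 1 else 0) :
    ((1 : Matrix (Fin nbar) (Fin nbar) ℂ) + (τ : ℂ) • Kc) * U - U * Sgᵀ = Gc := by
  have hℓ0 : ℓ ≠ 0 := NeZero.ne ℓ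
  have hl0 : (ℓ : ℂ) ≠ 0 := Nat.cast_ne_zero.mpr hℓ0
  -- ω is a primitive ℓ-th root of unity
  have hωinv : ω = (Complex.exp (2 * Real.pi * Complex.I / ℓ))⁻¹ := by
    rw [hω, ← Complex.exp_neg, neg_div]
  have hprim : IsPrimitiveRoot ω ℓ := by
    rw [hωinv]; exact (Complex.isPrimitiveRoot_exp ℓ hℓ0).inv
  have hω1 : ω ^ ℓ = 1 := hprim.pow_eq_one
  have hωne : ω ≠ 0 := by
    intro h
    rw [h, zero_pow hℓ0] at hω1
    exact zero_ne_one hω1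
  have hconj : (starRingEnd ℂ) ω = ω⁻¹ := by
    rw [hω, ← Complex.exp_conj, ← Complex.exp_neg]
    congr 1
    rw [map_div₀, map_neg, _root_.map_mul, _root_.map_mul, Complex.conj_natCast,
      Complex.conj_I, Complex.conj_ofReal, map_ofNat]
    ring
  -- orthogonality of characters
  have horth : ∀ j k : Fin ℓ,
      (∑ m : Fin ℓ, ω ^ ((j : ℕ) * (m : ℕ)) * (starRingEnd ℂ) (ω ^ ((k : ℕ) * (m : ℕ))))
        = if j = k then (ℓ : ℂ) else 0 := by
    intro j k
    have hterm : ∀ m : Fin ℓ,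
        ω ^ ((j : ℕ) * (m : ℕ)) * (starRingEnd ℂ) (ω ^ ((k : ℕ) * (m : ℕ)))
          = (ω ^ (j : ℕ) * (ω ^ (k : ℕ))⁻¹) ^ (m : ℕ) := by
      intro m
      rw [map_pow, hconj, inv_pow, mul_pow, inv_pow, ← pow_mul, ← pow_mul]
    rw [Finset.sum_congr rfl (fun m _ => hterm m)]
    set ζ : ℂ := ω ^ (j : ℕ) * (ω ^ (k : ℕ))⁻¹ with hζdef
    have hζℓ : ζ ^ ℓ = 1 := by
      rw [hζdef, mul_pow, inv_pow, ← pow_mul, ← pow_mul, mul_comm (j : ℕ) ℓ,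
        mul_comm (k : ℕ) ℓ, pow_mul, pow_mul, hω1, one_pow, one_pow, inv_one, mul_one]
    rw [Fin.sum_univ_eq_sum_range (fun m => ζ ^ m) ℓ]
    by_cases hjk : j = k
    · have h1 : ζ = 1 := by
        rw [hζdef, hjk, mul_inv_cancel₀ (pow_ne_zero _ hωne)]
      simp [h1, hjk]
    · have hζ1 : ζ ≠ 1 := by
        intro h
        apply hjk
        rw [hζdef, mul_inv_eq_one₀ (pow_ne_zero _ hωne)] at h
        exact Fin.ext (hprim.pow_inj j.isLt k.isLt h)
      rw [geom_sum_eq hζ1, hζℓ]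
      simp [hjk]
  -- the inverse of F
  set Fi : Matrix (Fin ℓ) (Fin ℓ) ℂ :=
    Matrix.of (fun j k => (ℓ : ℂ)⁻¹ * (starRingEnd ℂ) (ω ^ ((j : ℕ) * (k : ℕ)))) with hFi
  have hFFi : F * Fi = 1 := by
    ext j k
    rw [Matrix.mul_apply]
    have hterm : ∀ m : Fin ℓ, F j m * Fi m k
        = (ℓ : ℂ)⁻¹ * (ω ^ ((j : ℕ) * (m : ℕ)) * (starRingEnd ℂ) (ω ^ ((k : ℕ) * (m : ℕ)))) := by
      intro m
      rw [hF, hFi, Matrix.of_apply, mul_comm (m : ℕ) (k : ℕ)]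
      ring
    rw [Finset.sum_congr rfl (fun m _ => hterm m), ← Finset.mul_sum, horth j k]
    by_cases hjk : j = k
    · simp [hjk, Matrix.one_apply, inv_mul_cancel₀ hl0]
    · simp [hjk, Matrix.one_apply]
  have hFiF : Fi * F = 1 := by
    ext j k
    rw [Matrix.mul_apply]
    have hterm : ∀ m : Fin ℓ, Fi j m * F m k
        = (ℓ : ℂ)⁻¹ * (ω ^ ((k : ℕ) * (m : ℕ)) * (starRingEnd ℂ) (ω ^ ((j : ℕ) * (m : ℕ)))) := by
      intro m
      rw [hF, hFi, Matrix.of_apply, mul_comm (m : ℕ) (k : ℕ)]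
      ring
    rw [Finset.sum_congr rfl (fun m _ => hterm m), ← Finset.mul_sum, horth k j]
    by_cases hjk : j = k
    · simp [hjk, Matrix.one_apply, inv_mul_cancel₀ hl0]
    · simp [hjk, Ne.symm hjk, Matrix.one_apply]
  have hFinv : F⁻¹ = Fi := inv_eq_right_inv hFFi
  have hFmulinv : F * F⁻¹ = 1 := by rw [hFinv]; exact hFFi
  have hFinvmul : F⁻¹ * F = 1 := by rw [hFinv]; exact hFiF
  have hFtcancel : Fᵀ * (F⁻¹)ᵀ = 1 := by
    rw [← Matrix.transpose_mul, hFinvmul, Matrix.transpose_one]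
  have hFitFt : (F⁻¹)ᵀ * Fᵀ = 1 := by
    rw [← Matrix.transpose_mul, hFmulinv, Matrix.transpose_one]
  -- the eL column of F⁻ᵀ is γ
  have hγvec : ∀ i : Fin ℓ, (F⁻¹)ᵀ i eL = γ i := by
    intro i
    have hpow1 : ω ^ ((ℓ - 1) * (i : ℕ)) * ω ^ (i : ℕ) = 1 := by
      rw [← pow_add]
      have hadd : (ℓ - 1) * (i : ℕ) + (i : ℕ) = ℓ * (i : ℕ) := by
        cases ℓ with
        | zero => exact absurd rfl hℓ0
        | succ n => simp [Nat.succ_sub_one]; ring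
      rw [hadd, pow_mul, hω1, one_pow]
    have hconjpow : (starRingEnd ℂ) (ω ^ ((ℓ - 1) * (i : ℕ))) = ω ^ (i : ℕ) := by
      rw [map_pow, hconj, inv_pow]
      exact inv_eq_of_mul_eq_one_right hpow1
    rw [Matrix.transpose_apply, hFinv, hFi, Matrix.of_apply, heL, hconjpow, hγ, hπ]
    ring
  -- units of A i and J
  have hAinv : ∀ i, A i * (A i)⁻¹ = 1 := fun i =>
    Matrix.mul_nonsing_inv _ ((Matrix.isUnit_iff_isUnit_det _).mp (hAu i))
  have hJinv : J * J⁻¹ = 1 :=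
    Matrix.mul_nonsing_inv _ ((Matrix.isUnit_iff_isUnit_det _).mp hJu)
  -- bvec in terms of L and γ
  have hbvec : ∀ a, bvec a = ∑ i, L a i * γ i := by
    intro a
    rw [hb]
    have h1 : ((L * (F⁻¹)ᵀ) *ᵥ Pi.single eL 1) a = (L * (F⁻¹)ᵀ) a eL := by
      simp [Matrix.mulVec, dotProduct, Pi.single_apply]
    rw [h1, Matrix.mul_apply]
    exact Finset.sum_congr rfl fun i _ => by rw [hγvec]
  have hJx : J *ᵥ x = bvec := by
    rw [hx, Matrix.mulVec_mulVec, hJinv, Matrix.one_mulVec]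
  -- sum over W columns weighted by γ
  have hWsum : ∀ a, (∑ i, W a i * γ i) = bvec a - x a := by
    intro a
    have h1 : (∑ i, W a i * γ i) = ((∑ i, γ i • (A i)⁻¹) *ᵥ x) a := by
      simp only [Matrix.mulVec, dotProduct, Matrix.sum_apply, Matrix.smul_apply,
        smul_eq_mul, Finset.sum_mul]
      rw [Finset.sum_comm]
      refine Finset.sum_congr rfl fun i _ => ?_
      rw [hW, Matrix.mulVec, dotProduct, Finset.sum_mul]
      refine Finset.sum_congr rfl fun c _ => ?_
      ring
    have h2 : (∑ i, γ i • (A i)⁻¹) = J - 1 := by rw [hJ]; abel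
    rw [h1, h2, Matrix.sub_mulVec, Matrix.one_mulVec]
    have h3 := congrFun hJx a
    simp only [Pi.sub_apply]
    rw [h3]
  -- the eL column of U is x
  have hcol : ∀ a, U a eL = x a := by
    intro a
    rw [hU, Matrix.mul_apply]
    have h1 : ∀ i, (L - W) a i * (F⁻¹)ᵀ i eL = L a i * γ i - W a i * γ i := by
      intro i; rw [hγvec, Matrix.sub_apply]; ring
    rw [Finset.sum_congr rfl fun i _ => h1 i, Finset.sum_sub_distrib, ← hbvec a, hWsum a]
    ring
  -- key identity: Sgᵀ * Fᵀ = Fᵀ * diagonal π - Ecol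
  set Ecol : Matrix (Fin ℓ) (Fin ℓ) ℂ :=
    Matrix.of (fun j _ => if j = eL then (1 : ℂ) else 0) with hEcol
  have hSgF : Sgᵀ * Fᵀ = Fᵀ * Matrix.diagonal π - Ecol := by
    ext j k
    rw [Matrix.mul_apply, Matrix.sub_apply, Matrix.mul_diagonal, Matrix.transpose_apply,
      hF, hπ, hEcol, Matrix.of_apply]
    have hterm : ∀ m : Fin ℓ, Sgᵀ j m * Fᵀ m k
        = (if (m : ℕ) = (j : ℕ) + 1 then ω ^ ((k : ℕ) * (m : ℕ)) else 0) := by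
      intro m
      rw [Matrix.transpose_apply, Matrix.transpose_apply, hSg, hF]
      split <;> simp
    rw [Finset.sum_congr rfl fun m _ => hterm m]
    by_cases hje : j = eL
    · have hz : ∀ m : Fin ℓ, m ∈ Finset.univ →
          (if (m : ℕ) = (j : ℕ) + 1 then ω ^ ((k : ℕ) * (m : ℕ)) else 0) = 0 := by
        intro m _
        have hm := m.isLt
        have hjval : (j : ℕ) = ℓ - 1 := hje ▸ heL
        have hne : (m : ℕ) ≠ (j : ℕ) + 1 := by omega
        simp [hne]
      rw [Finset.sum_eq_zero hz]
      have hjval : (j : ℕ) = ℓ - 1 := hje ▸ heL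
      have hpows : ω ^ ((k : ℕ) * (j : ℕ)) * ω ^ (k : ℕ) = 1 := by
        rw [← pow_add]
        have : (k : ℕ) * (j : ℕ) + (k : ℕ) = ℓ * (k : ℕ) := by
          rw [hjval]; cases ℓ with
          | zero => exact absurd rfl hℓ0
          | succ n => simp [Nat.succ_sub_one]; ring
        rw [this, pow_mul, hω1, one_pow]
      rw [if_pos hje]
      linear_combination -hpows
    · have hjlt : (j : ℕ) + 1 < ℓ := by
        have hm := j.isLt
        have : (j : ℕ) ≠ ℓ - 1 := fun h => hje (Fin.ext (h.trans heL.symm))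
        omega
      set m₀ : Fin ℓ := ⟨(j : ℕ) + 1, hjlt⟩ with hm₀
      rw [Finset.sum_eq_single m₀
        (fun m _ hm => by
          have : (m : ℕ) ≠ (j : ℕ) + 1 := fun h => hm (Fin.ext h)
          simp [this])
        (fun h => absurd (Finset.mem_univ m₀) h)]
      have : ((m₀ : ℕ) = (j : ℕ) + 1) := rfl
      rw [if_pos this]
      have : (k : ℕ) * ((j : ℕ) + 1) = (k : ℕ) * (j : ℕ) + (k : ℕ) := by ring
      simp only [hm₀]
      rw [this, pow_add]
      simp [hje]
  -- main computation
  have hUF : U * Fᵀ = L - W := by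
    rw [hU, Matrix.mul_assoc, hFitFt, Matrix.mul_one]
  have hUEcol : U * Ecol = Matrix.of (fun a (_ : Fin ℓ) => x a) := by
    ext a k
    rw [Matrix.mul_apply, Matrix.of_apply]
    simp only [hEcol, Matrix.of_apply, mul_ite, mul_one, mul_zero]
    rw [Finset.sum_ite_eq' Finset.univ eL (fun m => U a m)]
    simp [hcol a]
  have hexp : ∀ i, A i * (L - W)
      = ((1 : Matrix (Fin nbar) (Fin nbar) ℂ) + (τ : ℂ) • Kc) * (L - W) - π i • (L - W) := by
    intro i
    rw [hA, Matrix.add_mul, Matrix.add_mul, Matrix.smul_mul, Matrix.smul_mul,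
      Matrix.one_mul, sub_smul, one_smul]
    abel
  have hAL : ∀ (i : Fin ℓ) (a : Fin nbar), (A i * L) a i = (Gc * Fᵀ) a i := by
    intro i a
    rw [Matrix.mul_apply, Finset.sum_congr rfl (fun c _ => by rw [hL i c]),
      ← Matrix.mul_apply, ← Matrix.mul_assoc, hAinv i, Matrix.one_mul]
  have hAW : ∀ (i : Fin ℓ) (a : Fin nbar), (A i * W) a i = x a := by
    intro i a
    rw [Matrix.mul_apply, Finset.sum_congr rfl (fun c _ => by rw [hW i c])]
    have h1 : ∑ c, A i a c * ((A i)⁻¹ *ᵥ x) c = (A i *ᵥ ((A i)⁻¹ *ᵥ x)) a := rfl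
    rw [h1, Matrix.mulVec_mulVec, hAinv i, Matrix.one_mulVec]
  have key : (((1 : Matrix (Fin nbar) (Fin nbar) ℂ) + (τ : ℂ) • Kc) * U - U * Sgᵀ) * Fᵀ
      = Gc * Fᵀ := by
    rw [Matrix.sub_mul, Matrix.mul_assoc, Matrix.mul_assoc, hUF, hSgF,
      Matrix.mul_sub U (Fᵀ * Matrix.diagonal π) Ecol, ← Matrix.mul_assoc U Fᵀ, hUF, hUEcol]
    ext a i
    have e1 := congrFun (congrFun (hexp i) a) i
    have e2 : (A i * (L - W)) a i = (A i * L) a i - (A i * W) a i := by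
      rw [Matrix.mul_sub, Matrix.sub_apply]
    simp only [Matrix.sub_apply, Matrix.smul_apply, smul_eq_mul, Matrix.of_apply,
      Matrix.mul_diagonal] at e1 ⊢
    linear_combination -e1 + e2 + hAL i a - hAW i a
  have hfin := congrArg (fun X => X * (F⁻¹)ᵀ) key
  rw [Matrix.mul_assoc, Matrix.mul_assoc, hFtcancel, Matrix.mul_one, Matrix.mul_one] at hfin
  exact hfin
end

section
/- (Correctness of the ParaDiag algorithm with α-acceleration.) Let α ∈ (0,1], K ∈ ℝ^{n̄×n̄}, τ > 0, and G ∈ ℝ^{n̄×ℓ}. Set D_α = diag(1, α^{1/ℓ}, …, α^{(ℓ−1)/ℓ}) and π_i^{(α)} = α^{1/ℓ}·π_i, and assume that (1−π_i^{(α)})·I_{n̄} + τ·K is invertible for all i = 1,…,ℓ and that J = I_{n̄} + α^{1/ℓ}·Σ_{i=1}^ℓ γ_i·((1−π_i^{(α)})·I_{n̄} + τ·K)^{−1} is invertible. Define L ∈ ℂ^{n̄×ℓ} column-wise by L·e_i = ((1−π_i^{(α)})·I_{n̄} + τ·K)^{−1}·G·D_α·F^T·e_i, set U_1 = L·F^{−T}·D_α^{−1},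 b = L·F^{−T}·e_ℓ, x = J^{−1}·b, define W ∈ ℂ^{n̄×ℓ} column-wise by W·e_i = ((1−π_i^{(α)})·I_{n̄} + τ·K)^{−1}·x, and set U = U_1 − α^{1/ℓ}·W·F^{−T}·D_α^{−1}. Then (I_{n̄} + τ·K)·U − U·Σ_1^T = G, where Σ_1 ∈ ℝ^{ℓ×ℓ} is the matrix with ones on the first subdiagonal and zeros elsewhere. -/
open Matrix

/-- DFT orthogonality helper. -/
lemma paradiag_dft_sum (ℓ : ℕ) [NeZero ℓ] (ω : ℂ) (hprim : IsPrimitiveRoot ω ℓ) (j m : Fin ℓ) :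
    ∑ k : Fin ℓ, (ω ^ (j:ℕ) * (ω ^ (m:ℕ))⁻¹) ^ (k:ℕ) = if j = m then (ℓ:ℂ) else 0 := by
  have hω0 : ω ≠ 0 := by
    intro h
    have := hprim.pow_eq_one
    simp [h, zero_pow (NeZero.ne ℓ)] at this
  by_cases hjm : j = m
  · subst hjm
    simp [mul_inv_cancel₀ (pow_ne_zero _ hω0)]
  · rw [if_neg hjm]
    have h1 : ω ^ (j:ℕ) * (ω ^ (m:ℕ))⁻¹ ≠ 1 := by
      intro h
      have : ω ^ (j:ℕ) = ω ^ (m:ℕ) := by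
        field_simp at h
        exact h
      exact hjm (Fin.ext (hprim.pow_inj j.isLt m.isLt this))
    have hn : (ω ^ (j:ℕ) * (ω ^ (m:ℕ))⁻¹) ^ ℓ = 1 := by
      rw [mul_pow, ← pow_mul, ← inv_pow, ← pow_mul, mul_comm (j:ℕ) ℓ, mul_comm (m:ℕ) ℓ,
        pow_mul, pow_mul, hprim.pow_eq_one, inv_pow, hprim.pow_eq_one]
      simp
    rw [Fin.sum_univ_eq_sum_range (fun k => (ω ^ (j:ℕ) * (ω ^ (m:ℕ))⁻¹) ^ k),
      geom_sum_eq h1, hn, sub_self, zero_div]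

/-- correctness of the ParaDiag algorithm with α-acceleration:
the computed `U = U₁ - α^{1/ℓ} W F⁻ᵀ D_α⁻¹` satisfies `(I + τK) U - U Σ₁ᵀ = G`. -/
theorem paradiag_alpha_acceleration_correct
    (nbar ℓ : ℕ) [NeZero ℓ]
    (α : ℝ) (hα0 : 0 < α) (hα1 : α ≤ 1)
    (ω : ℂ) (hω : ω = Complex.exp (-(2 * Real.pi * Complex.I) / ℓ))
    (π : Fin ℓ → ℂ) (hπ : ∀ i, π i = ω ^ (i : ℕ))
    (γ : Fin ℓ → ℂ) (hγ : ∀ i, γ i = π i / ℓ)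
    (F : Matrix (Fin ℓ) (Fin ℓ) ℂ)
    (hF : ∀ j k : Fin ℓ, F j k = ω ^ ((j : ℕ) * (k : ℕ)))
    (eL : Fin ℓ) (heL : (eL : ℕ) = ℓ - 1)
    (Dα : Matrix (Fin ℓ) (Fin ℓ) ℂ)
    (hDα : Dα = Matrix.diagonal fun j : Fin ℓ => ((α ^ ((j : ℕ) / (ℓ : ℝ)) : ℝ) : ℂ))
    (πα : Fin ℓ → ℂ)
    (hπα : ∀ i, πα i = ((α ^ ((1 : ℝ) / (ℓ : ℝ)) : ℝ) : ℂ) * π i)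
    (K : Matrix (Fin nbar) (Fin nbar) ℝ) (τ : ℝ) (hτ : 0 < τ)
    (Kc : Matrix (Fin nbar) (Fin nbar) ℂ) (hKc : Kc = K.map Complex.ofReal)
    (G : Matrix (Fin nbar) (Fin ℓ) ℝ)
    (Gc : Matrix (Fin nbar) (Fin ℓ) ℂ) (hGc : Gc = G.map Complex.ofReal)
    (A : Fin ℓ → Matrix (Fin nbar) (Fin nbar) ℂ)
    (hA : ∀ i, A i = (1 - πα i) • (1 : Matrix (Fin nbar) (Fin nbar) ℂ) + (τ : ℂ) • Kc)
    (hAu : ∀ i, IsUnit (A i))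
    (J : Matrix (Fin nbar) (Fin nbar) ℂ)
    (hJ : J = 1 + ((α ^ ((1 : ℝ) / (ℓ : ℝ)) : ℝ) : ℂ) • ∑ i, γ i • (A i)⁻¹)
    (hJu : IsUnit J)
    (L : Matrix (Fin nbar) (Fin ℓ) ℂ)
    (hL : ∀ (i : Fin ℓ) (a : Fin nbar), L a i = ((A i)⁻¹ * (Gc * Dα * Fᵀ)) a i)
    (U₁ : Matrix (Fin nbar) (Fin ℓ) ℂ)
    (hU₁ : U₁ = L * (F⁻¹)ᵀ * Dα⁻¹)
    (bvec : Fin nbar → ℂ)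
    (hb : bvec = (L * (F⁻¹)ᵀ) *ᵥ Pi.single eL 1)
    (x : Fin nbar → ℂ) (hx : x = J⁻¹ *ᵥ bvec)
    (W : Matrix (Fin nbar) (Fin ℓ) ℂ)
    (hW : ∀ (i : Fin ℓ) (a : Fin nbar), W a i = ((A i)⁻¹ *ᵥ x) a)
    (U : Matrix (Fin nbar) (Fin ℓ) ℂ)
    (hU : U = U₁ - ((α ^ ((1 : ℝ) / (ℓ : ℝ)) : ℝ) : ℂ) • (W * (F⁻¹)ᵀ * Dα⁻¹))
    (Sg : Matrix (Fin ℓ) (Fin ℓ) ℂ)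
    (hSg : ∀ j k : Fin ℓ, Sg j k = if (j : ℕ) = (k : ℕ) + 1 then 1 else 0) :
    ((1 : Matrix (Fin nbar) (Fin nbar) ℂ) + (τ : ℂ) • Kc) * U - U * Sgᵀ = Gc := by
  have hℓ0 : (ℓ:ℂ) ≠ 0 := Nat.cast_ne_zero.mpr (NeZero.ne ℓ)
  have hℓpos : 0 < ℓ := Nat.pos_of_ne_zero (NeZero.ne ℓ)
  obtain ⟨n, hn⟩ : ∃ n, ℓ = n + 1 := ⟨ℓ - 1, (Nat.succ_pred_eq_of_pos hℓpos).symm⟩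
  -- primitive root facts
  have hprim : IsPrimitiveRoot ω ℓ := by
    have h := (Complex.isPrimitiveRoot_exp ℓ (NeZero.ne ℓ)).inv
    rw [hω, neg_div, Complex.exp_neg]
    exact h
  have hωℓ : ω ^ ℓ = 1 := hprim.pow_eq_one
  have hω0 : ω ≠ 0 := by
    intro h
    rw [h, zero_pow (NeZero.ne ℓ)] at hωℓ
    exact zero_ne_one hωℓ
  -- θ facts
  set θ : ℝ := α ^ ((1:ℝ)/(ℓ:ℝ)) with hθdef
  set θc : ℂ := (θ : ℂ) with hθcdef
  have hθpos : 0 < θ := Real.rpow_pos_of_pos hα0 _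
  have hθne : θc ≠ 0 := by
    simp only [hθcdef, ne_eq, Complex.ofReal_eq_zero]
    exact ne_of_gt hθpos
  have hθℓR : θ ^ ℓ = α := by
    rw [hθdef, ← Real.rpow_natCast (α ^ ((1:ℝ)/(ℓ:ℝ))) ℓ, ← Real.rpow_mul (le_of_lt hα0)]
    rw [one_div, inv_mul_cancel₀ (by exact_mod_cast NeZero.ne ℓ : (ℓ:ℝ) ≠ 0), Real.rpow_one]
  have hθℓ : θc ^ ℓ = (α : ℂ) := by
    rw [hθcdef, ← Complex.ofReal_pow, hθℓR]
  -- Dα in terms of θ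
  have hcompd : ∀ j : Fin ℓ, ((α ^ ((j:ℕ) / (ℓ:ℝ)) : ℝ) : ℂ) = θc ^ (j:ℕ) := by
    intro j
    have h1 : α ^ ((j:ℕ) / (ℓ:ℝ)) = θ ^ (j:ℕ) := by
      rw [hθdef, ← Real.rpow_natCast (α ^ ((1:ℝ)/(ℓ:ℝ))) (j:ℕ), ← Real.rpow_mul (le_of_lt hα0)]
      congr 1
      field_simp
    rw [h1, Complex.ofReal_pow]
  have hd : Dα = Matrix.diagonal (fun j : Fin ℓ => θc ^ (j:ℕ)) := by
    rw [hDα]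
    exact congrArg Matrix.diagonal (funext hcompd)
  -- power manipulation helper
  have hpow : ∀ (j m k : Fin ℓ), (ω ^ (j:ℕ) * (ω ^ (m:ℕ))⁻¹) ^ (k:ℕ)
      = ω ^ ((j:ℕ)*(k:ℕ)) * (ω ^ ((k:ℕ)*(m:ℕ)))⁻¹ := by
    intro j m k
    rw [mul_pow, ← pow_mul, inv_pow, ← pow_mul, mul_comm (m:ℕ) (k:ℕ)]
  -- explicit inverses
  set Fi : Matrix (Fin ℓ) (Fin ℓ) ℂ :=
    Matrix.of (fun j k => (ℓ:ℂ)⁻¹ * (ω ^ ((j:ℕ) * (k:ℕ)))⁻¹) with hFi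
  set Di : Matrix (Fin ℓ) (Fin ℓ) ℂ :=
    Matrix.diagonal (fun j : Fin ℓ => (θc ^ (j:ℕ))⁻¹) with hDi
  have hFFi : F * Fi = 1 := by
    ext j m
    rw [mul_apply]
    have hterm : ∀ k : Fin ℓ, F j k * Fi k m
        = (ℓ:ℂ)⁻¹ * (ω ^ (j:ℕ) * (ω ^ (m:ℕ))⁻¹) ^ (k:ℕ) := by
      intro k
      rw [hF, hFi]
      simp only [Matrix.of_apply]
      rw [hpow j m k]
      ring
    rw [Finset.sum_congr rfl (fun k _ => hterm k), ← Finset.mul_sum,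
      paradiag_dft_sum ℓ ω hprim j m]
    by_cases hjm : j = m
    · subst hjm
      simp [inv_mul_cancel₀ hℓ0, Matrix.one_apply]
    · simp [hjm, Matrix.one_apply]
  have hFiF : Fi * F = 1 := by
    ext j m
    rw [mul_apply]
    have hterm : ∀ k : Fin ℓ, Fi j k * F k m
        = (ℓ:ℂ)⁻¹ * (ω ^ (m:ℕ) * (ω ^ (j:ℕ))⁻¹) ^ (k:ℕ) := by
      intro k
      rw [hF, hFi]
      simp only [Matrix.of_apply]
      rw [hpow m j k, mul_comm (k:ℕ) (j:ℕ), mul_comm (m:ℕ) (k:ℕ)]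
      ring
    rw [Finset.sum_congr rfl (fun k _ => hterm k), ← Finset.mul_sum,
      paradiag_dft_sum ℓ ω hprim m j]
    by_cases hjm : m = j
    · subst hjm
      simp [inv_mul_cancel₀ hℓ0, Matrix.one_apply]
    · simp [hjm, Ne.symm hjm, Matrix.one_apply]
  have hFinv : F⁻¹ = Fi := Matrix.inv_eq_right_inv hFFi
  have hDDi : Dα * Di = 1 := by
    rw [hd, hDi, Matrix.diagonal_mul_diagonal]
    simp only [mul_inv_cancel₀ (pow_ne_zero _ hθne)]
    exact Matrix.diagonal_one
  have hDiD : Di * Dα = 1 := by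
    rw [hd, hDi, Matrix.diagonal_mul_diagonal]
    simp only [inv_mul_cancel₀ (pow_ne_zero _ hθne)]
    exact Matrix.diagonal_one
  have hDinv : Dα⁻¹ = Di := Matrix.inv_eq_right_inv hDDi
  -- M and N
  set M : Matrix (Fin ℓ) (Fin ℓ) ℂ := Dα * Fᵀ with hM
  set N : Matrix (Fin ℓ) (Fin ℓ) ℂ := Fiᵀ * Di with hN
  have hMN : M * N = 1 := by
    rw [hM, hN, Matrix.mul_assoc, ← Matrix.mul_assoc Fᵀ, ← Matrix.transpose_mul, hFiF,
      Matrix.transpose_one, Matrix.one_mul, hDDi]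
  have hNM : N * M = 1 := by
    rw [hM, hN, Matrix.mul_assoc, ← Matrix.mul_assoc Di, hDiD, Matrix.one_mul,
      ← Matrix.transpose_mul, hFFi, Matrix.transpose_one]
  -- the α-circulant
  set Cα : Matrix (Fin ℓ) (Fin ℓ) ℂ :=
    Matrix.of (fun m j : Fin ℓ =>
      if (m:ℕ) = (j:ℕ) + 1 then 1 else if (m:ℕ) = 0 ∧ (j:ℕ) = ℓ - 1 then (α:ℂ) else 0) with hCα
  have hMentry : ∀ j k : Fin ℓ, M j k = θc ^ (j:ℕ) * ω ^ ((k:ℕ) * (j:ℕ)) := by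
    intro j k
    rw [hM, hd, Matrix.diagonal_mul, Matrix.transpose_apply, hF]
  -- spectral identity
  have H1 : M * Matrix.diagonal πα = Cαᵀ * M := by
    ext j k
    rw [Matrix.mul_diagonal, mul_apply]
    simp only [Matrix.transpose_apply]
    by_cases hj : (j:ℕ) = ℓ - 1
    · have hterm : ∀ m : Fin ℓ, Cα m j * M m k
          = if m = (0 : Fin ℓ) then (α:ℂ) * M m k else 0 := by
        intro m
        rw [hCα]
        simp only [Matrix.of_apply]
        have hm1 : ¬ ((m:ℕ) = (j:ℕ) + 1) := by
          have := m.isLt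
          omega
        rw [if_neg hm1]
        by_cases hm0 : m = (0 : Fin ℓ)
        · subst hm0
          simp [hj]
        · have : ¬ ((m:ℕ) = 0) := fun h => hm0 (Fin.ext (by simp [h]))
          simp [this, hm0]
      rw [Finset.sum_congr rfl (fun m _ => hterm m), Finset.sum_ite_eq' Finset.univ (0 : Fin ℓ)
        (fun m => (α:ℂ) * M m k), if_pos (Finset.mem_univ _)]
      have hM0 : M (0 : Fin ℓ) k = 1 := by
        rw [hMentry]
        simp
      have h1 : θc ^ (j:ℕ) * θc = (α:ℂ) := by
        rw [hj, ← pow_succ, Nat.sub_add_cancel hℓpos, hθℓ]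
      have h2 : ω ^ ((k:ℕ)*(j:ℕ)) * ω ^ (k:ℕ) = 1 := by
        rw [← pow_add, hj]
        have he : (k:ℕ)*(ℓ-1) + (k:ℕ) = ℓ * (k:ℕ) := by
          subst hn
          rw [Nat.add_sub_cancel]
          ring
        rw [he, pow_mul, hωℓ, one_pow]
      calc M j k * πα k = (θc ^ (j:ℕ) * θc) * (ω ^ ((k:ℕ)*(j:ℕ)) * ω ^ (k:ℕ)) := by
            rw [hMentry, hπα, hπ]; ring
        _ = (α:ℂ) * M (0 : Fin ℓ) k := by rw [h1, h2, hM0]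
    · have hjlt : (j:ℕ) + 1 < ℓ := by
        have := j.isLt
        omega
      set j1 : Fin ℓ := ⟨(j:ℕ) + 1, hjlt⟩ with hj1
      have hterm : ∀ m : Fin ℓ, Cα m j * M m k = if m = j1 then M m k else 0 := by
        intro m
        rw [hCα]
        simp only [Matrix.of_apply]
        by_cases hm : m = j1
        · subst hm
          simp [hj1]
        · have h1 : ¬ ((m:ℕ) = (j:ℕ) + 1) := fun h => hm (Fin.ext (by simp [hj1, h]))
          simp [h1, hj, hm]
      rw [Finset.sum_congr rfl (fun m _ => hterm m), Finset.sum_ite_eq' Finset.univ j1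
        (fun m => M m k), if_pos (Finset.mem_univ _)]
      have hj1v : (j1:ℕ) = (j:ℕ) + 1 := rfl
      rw [hMentry, hMentry, hπα, hπ, hj1v]
      rw [pow_succ, Nat.mul_add, Nat.mul_one, pow_add]
      ring
  -- helper: B = A i + πα i • 1
  set B : Matrix (Fin nbar) (Fin nbar) ℂ := 1 + (τ:ℂ) • Kc with hB
  have hBA : ∀ i, B = A i + πα i • 1 := by
    intro i
    rw [hB, hA, sub_smul, one_smul]
    abel
  have hAdet : ∀ i, IsUnit (A i).det := fun i => (Matrix.isUnit_iff_isUnit_det _).mp (hAu i)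
  have hAAi : ∀ i, A i * (A i)⁻¹ = 1 := fun i => Matrix.mul_nonsing_inv _ (hAdet i)
  -- matrix equation for L
  have hBLmat : B * L - L * Matrix.diagonal πα = Gc * Dα * Fᵀ := by
    ext a i
    rw [Matrix.sub_apply, Matrix.mul_diagonal]
    have hmat : B * ((A i)⁻¹ * (Gc * Dα * Fᵀ))
        = Gc * Dα * Fᵀ + πα i • ((A i)⁻¹ * (Gc * Dα * Fᵀ)) := by
      rw [hBA i, Matrix.add_mul, Matrix.smul_mul, Matrix.one_mul,
        ← Matrix.mul_assoc, hAAi i, Matrix.one_mul]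
    have h1 : (B * L) a i = (Gc * Dα * Fᵀ) a i + πα i * L a i := by
      rw [mul_apply]
      calc ∑ b, B a b * L b i
          = ∑ b, B a b * ((A i)⁻¹ * (Gc * Dα * Fᵀ)) b i :=
            Finset.sum_congr rfl (fun b _ => by rw [hL i b])
        _ = (B * ((A i)⁻¹ * (Gc * Dα * Fᵀ))) a i := by rw [mul_apply]
        _ = (Gc * Dα * Fᵀ) a i + πα i * ((A i)⁻¹ * (Gc * Dα * Fᵀ)) a i := by
            rw [hmat, Matrix.add_apply, Matrix.smul_apply, smul_eq_mul]
        _ = (Gc * Dα * Fᵀ) a i + πα i * L a i := by rw [← hL i a]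
    rw [h1]
    ring
  -- matrix equation for W
  have hBWmat : B * W - W * Matrix.diagonal πα
      = Matrix.vecMulVec x (fun _ => 1) := by
    ext a i
    rw [Matrix.sub_apply, Matrix.mul_diagonal, Matrix.vecMulVec_apply, mul_one]
    have hmat : B *ᵥ ((A i)⁻¹ *ᵥ x) = x + πα i • ((A i)⁻¹ *ᵥ x) := by
      rw [Matrix.mulVec_mulVec, hBA i, Matrix.add_mul, Matrix.smul_mul, Matrix.one_mul,
        hAAi i, Matrix.add_mulVec, Matrix.one_mulVec, Matrix.smul_mulVec]
    have h1 : (B * W) a i = x a + πα i * W a i := by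
      rw [mul_apply]
      calc ∑ b, B a b * W b i
          = ∑ b, B a b * ((A i)⁻¹ *ᵥ x) b :=
            Finset.sum_congr rfl (fun b _ => by rw [hW i b])
        _ = (B *ᵥ ((A i)⁻¹ *ᵥ x)) a := rfl
        _ = x a + πα i * ((A i)⁻¹ *ᵥ x) a := by
            rw [hmat]
            simp [Pi.add_apply]
        _ = x a + πα i * W a i := by rw [← hW i a]
    rw [h1]
    ring
  -- diagonal/N commutation
  have hDiagN : Matrix.diagonal πα * N = N * Cαᵀ := by
    have h2 : Matrix.diagonal πα * N = N * M * Matrix.diagonal πα * N := by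
      rw [hNM, Matrix.one_mul]
    rw [h2, Matrix.mul_assoc N M, H1, ← Matrix.mul_assoc N, Matrix.mul_assoc (N * Cαᵀ), hMN,
      Matrix.mul_one]
  -- U₁ = L * N, and the main circulant equations
  have hU₁N : U₁ = L * N := by
    rw [hU₁, hFinv, hDinv, Matrix.mul_assoc, hN]
  have hEq1 : B * U₁ - U₁ * Cαᵀ = Gc := by
    rw [hU₁N, ← Matrix.mul_assoc, Matrix.mul_assoc L N Cαᵀ, ← hDiagN, ← Matrix.mul_assoc L,
      ← Matrix.sub_mul, hBLmat, Matrix.mul_assoc Gc Dα Fᵀ, ← hM, Matrix.mul_assoc Gc M N,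
      hMN, Matrix.mul_one]
  set V : Matrix (Fin nbar) (Fin ℓ) ℂ := W * N with hV
  have hsumN : ∀ k : Fin ℓ, ∑ j, N j k = if (0 : Fin ℓ) = k then 1 else 0 := by
    intro k
    have h0 : ∀ j, M (0 : Fin ℓ) j = 1 := by
      intro j
      rw [hMentry]
      simp
    calc ∑ j, N j k = ∑ j, M (0 : Fin ℓ) j * N j k := by
          refine Finset.sum_congr rfl (fun j _ => ?_)
          rw [h0, one_mul]
      _ = (M * N) (0 : Fin ℓ) k := (mul_apply).symm
      _ = (1 : Matrix (Fin ℓ) (Fin ℓ) ℂ) (0 : Fin ℓ) k := by rw [hMN]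
      _ = if (0 : Fin ℓ) = k then 1 else 0 := Matrix.one_apply
  have hkey : (Matrix.vecMulVec x (fun _ => 1) : Matrix (Fin nbar) (Fin ℓ) ℂ) * N
      = Matrix.vecMulVec x (fun k : Fin ℓ => if k = 0 then 1 else 0) := by
    ext a k
    rw [Matrix.mul_apply, Matrix.vecMulVec_apply]
    simp only [Matrix.vecMulVec_apply, mul_one]
    rw [← Finset.mul_sum, hsumN k]
    by_cases hk : k = 0
    · subst hk
      simp
    · simp [hk, Ne.symm hk]
  have hEq2 : B * V - V * Cαᵀ
      = Matrix.vecMulVec x (fun k : Fin ℓ => if k = 0 then 1 else 0) := by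
    rw [hV, ← Matrix.mul_assoc, Matrix.mul_assoc W N Cαᵀ, ← hDiagN, ← Matrix.mul_assoc W,
      ← Matrix.sub_mul, hBWmat, hkey]
  have hUV : U = U₁ - θc • V := by
    rw [hU, hFinv, hDinv, Matrix.mul_assoc W, ← hN, ← hV]
  -- column identity: α · U_eL = θ x
  have hγFi : ∀ i : Fin ℓ, Fi eL i = γ i := by
    intro i
    rw [hFi, hγ, hπ]
    simp only [Matrix.of_apply]
    have hinv : (ω ^ ((eL:ℕ) * (i:ℕ)))⁻¹ = ω ^ (i:ℕ) := by
      apply inv_eq_of_mul_eq_one_right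
      rw [← pow_add, heL]
      have he : (ℓ-1) * (i:ℕ) + (i:ℕ) = ℓ * (i:ℕ) := by
        subst hn
        rw [Nat.add_sub_cancel]
        ring
      rw [he, pow_mul, hωℓ, one_pow]
    rw [hinv, div_eq_mul_inv]
    ring
  have hbv : ∀ a, bvec a = (L * Fiᵀ) a eL := by
    intro a
    rw [hb, hFinv, Matrix.mulVec_single]
    exact mul_one _
  have hJdet : IsUnit J.det := (Matrix.isUnit_iff_isUnit_det J).mp hJu
  have hJxv : J *ᵥ x = bvec := by
    rw [hx, Matrix.mulVec_mulVec, Matrix.mul_nonsing_inv J hJdet, Matrix.one_mulVec]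
  have hJexp : ∀ a, bvec a = x a + θc * ∑ i, γ i * ((A i)⁻¹ *ᵥ x) a := by
    intro a
    rw [← hJxv, hJ, Matrix.add_mulVec, Matrix.one_mulVec, Matrix.smul_mulVec]
    simp only [Pi.add_apply, Pi.smul_apply, smul_eq_mul]
    congr 1
    congr 1
    rw [Matrix.mulVec, dotProduct]
    have hstep : ∀ b, (∑ i, γ i • (A i)⁻¹) a b * x b = ∑ i, γ i * ((A i)⁻¹ a b * x b) := by
      intro b
      rw [Matrix.sum_apply, Finset.sum_mul]
      exact Finset.sum_congr rfl fun i _ => by rw [Matrix.smul_apply, smul_eq_mul, mul_assoc]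
    rw [Finset.sum_congr rfl (fun b _ => hstep b), Finset.sum_comm]
    refine Finset.sum_congr rfl fun i _ => ?_
    rw [← Finset.mul_sum]
    rfl
  have hWFi : ∀ a, (W * Fiᵀ) a eL = ∑ i, γ i * ((A i)⁻¹ *ᵥ x) a := by
    intro a
    rw [mul_apply]
    refine Finset.sum_congr rfl (fun i _ => ?_)
    rw [Matrix.transpose_apply, hγFi, hW i a]
    ring
  have hU₁e : ∀ a, U₁ a eL = (L * Fiᵀ) a eL * (θc ^ (eL:ℕ))⁻¹ := by
    intro a
    rw [hU₁N, hN, ← Matrix.mul_assoc, hDi, Matrix.mul_diagonal]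
  have hVe : ∀ a, V a eL = (W * Fiᵀ) a eL * (θc ^ (eL:ℕ))⁻¹ := by
    intro a
    rw [hV, hN, ← Matrix.mul_assoc, hDi, Matrix.mul_diagonal]
  have hαθ : (α:ℂ) = θc ^ (eL:ℕ) * θc := by
    rw [heL, ← pow_succ, Nat.sub_add_cancel hℓpos, hθℓ]
  have hcol : ∀ a, (α:ℂ) * U a eL = θc * x a := by
    intro a
    have hUe : U a eL = x a * (θc ^ (eL:ℕ))⁻¹ := by
      rw [hUV, Matrix.sub_apply, Matrix.smul_apply, smul_eq_mul, hU₁e, hVe, ← hbv a, hJexp a,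
        hWFi a]
      ring
    rw [hUe, hαθ]
    have : θc ^ (eL:ℕ) ≠ 0 := pow_ne_zero _ hθne
    field_simp
  -- assembly
  have hEq3 : B * U - U * Cαᵀ
      = Gc - θc • Matrix.vecMulVec x (fun k : Fin ℓ => if k = 0 then 1 else 0) := by
    rw [hUV, Matrix.mul_sub, Matrix.sub_mul, Matrix.mul_smul, Matrix.smul_mul, ← hEq1, ← hEq2,
      smul_sub]
    abel
  set E : Matrix (Fin ℓ) (Fin ℓ) ℂ :=
    Matrix.of (fun j k : Fin ℓ => if j = eL ∧ k = 0 then (α:ℂ) else 0) with hE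
  have hCsplit : Cαᵀ = Sgᵀ + E := by
    ext j k
    rw [Matrix.transpose_apply, hCα, Matrix.add_apply, Matrix.transpose_apply, hSg, hE]
    simp only [Matrix.of_apply]
    by_cases h1 : (k:ℕ) = (j:ℕ) + 1
    · have hk0 : ¬ (k = (0 : Fin ℓ)) := by
        intro h
        rw [h] at h1
        simp at h1
      simp [h1, hk0]
    · have hiff : ((k:ℕ) = 0 ∧ (j:ℕ) = ℓ - 1) ↔ (j = eL ∧ k = 0) := by
        constructor
        · rintro ⟨hk, hj⟩
          exact ⟨Fin.ext (by rw [hj, heL]), Fin.ext (by simp [hk])⟩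
        · rintro ⟨hj, hk⟩
          subst hj; subst hk
          exact ⟨by simp, heL⟩
      by_cases h2 : (k:ℕ) = 0 ∧ (j:ℕ) = ℓ - 1
      · obtain ⟨hje, hke⟩ := hiff.mp h2
        subst hje
        subst hke
        simp [h1, heL]
      · have h3 : ¬ (j = eL ∧ k = 0) := fun h => h2 (hiff.mpr h)
        simp [h1, h2, h3]
        intro hk hj
        exact absurd ⟨by simp [hk], hj⟩ h2
  have hUE : U * E = θc • Matrix.vecMulVec x (fun k : Fin ℓ => if k = 0 then 1 else 0) := by
    ext a k
    rw [mul_apply, Matrix.smul_apply, Matrix.vecMulVec_apply, smul_eq_mul]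
    have hterm : ∀ j : Fin ℓ, U a j * E j k
        = if j = eL then U a j * (if k = 0 then (α:ℂ) else 0) else 0 := by
      intro j
      rw [hE]
      simp only [Matrix.of_apply]
      by_cases hj : j = eL
      · by_cases hk : k = (0 : Fin ℓ) <;> simp [hj, hk]
      · simp [hj]
    rw [Finset.sum_congr rfl (fun j _ => hterm j),
      Finset.sum_ite_eq' Finset.univ eL (fun j => U a j * (if k = 0 then (α:ℂ) else 0)),
      if_pos (Finset.mem_univ _)]
    by_cases hk : k = (0 : Fin ℓ)
    · subst hk
      rw [if_pos rfl, if_pos rfl, mul_one, mul_comm]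
      exact hcol a
    · simp [hk]
  calc B * U - U * Sgᵀ
      = (B * U - U * Cαᵀ) + U * E := by
        rw [hCsplit, Matrix.mul_add]
        abel
    _ = Gc := by
        rw [hEq3, hUE]
        abel
end

section
/- Let K ∈ ℝ^{n̄×n̄} be symmetric positive definite and τ > 0, and let J_ℓ = I_{n̄} + Σ_{i=1}^ℓ γ_i·((1−π_i)·I_{n̄} + τ·K)^{−1}, which is Hermitian. Then the smallest and largest eigenvalues of J_ℓ are given by λ_min(J_ℓ) = 1 + Σ_{i=1}^ℓ γ_i/(1−π_i+τ·λ_max(K)) and λ_max(J_ℓ) = 1 + Σ_{i=1}^ℓ γ_i/(1−π_i+τ·λ_min(K)), where λ_min(K) and λ_max(K) denote the smallest and largest eigenvalues of K (in particular both sums are real). -/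
open Matrix


open Polynomial Finset in
private lemma paradiag_derivative_fin_prod {ι : Type*} [DecidableEq ι] (s : Finset ι)
    (f : ι → Polynomial ℂ) :
    derivative (∏ i ∈ s, f i) = ∑ i ∈ s, (∏ j ∈ s.erase i, f j) * derivative (f i) := by
  induction s using Finset.induction_on with
  | empty => simp
  | @insert a s' hx ih =>
    rw [Finset.prod_insert hx, derivative_mul, ih, Finset.sum_insert hx,
      Finset.erase_insert hx, Finset.mul_sum, mul_comm (derivative (f a))]
    congr 1
    apply Finset.sum_congr rfl
    intro b hb
    rw [Finset.erase_insert_of_ne (by rintro rfl; exact hx hb)]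
    rw [Finset.prod_insert (fun h => hx (Finset.erase_subset _ _ h))]
    ring

open Polynomial Finset in
private lemma paradiag_deriv_sum (ℓ : ℕ) (ω : ℂ)
    (hprod : ∏ i ∈ range ℓ, (X - C (ω ^ i)) = X ^ ℓ - 1)
    (z : ℂ) (hz : ∀ i, z - ω ^ i ≠ 0) (hz1 : z ^ ℓ - 1 ≠ 0) :
    ∑ i ∈ range ℓ, (z - ω ^ i)⁻¹ = ℓ * z ^ (ℓ - 1) / (z ^ ℓ - 1) := by
  have hder := congrArg derivative hprod
  rw [paradiag_derivative_fin_prod] at hder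
  have heval := congrArg (eval z) hder
  simp only [eval_finset_sum, eval_sub, eval_pow, eval_X, eval_one, derivative_sub,
    derivative_one, derivative_X_pow, eval_prod, eval_C, eval_mul, eval_natCast,
    eval_smul, smul_eq_mul, sub_zero, derivative_X, derivative_C, eval_zero, mul_one] at heval
  have hall : ∏ j ∈ range ℓ, (z - ω ^ j) = z ^ ℓ - 1 := by
    have := congrArg (eval z) hprod
    simpa [eval_prod] using this
  have hterm : ∀ i ∈ range ℓ,
      ∏ j ∈ (range ℓ).erase i, (z - ω ^ j) = (z ^ ℓ - 1) * (z - ω ^ i)⁻¹ := by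
    intro i hi
    have h2 := Finset.mul_prod_erase (range ℓ) (fun j => z - ω ^ j) hi
    rw [hall] at h2
    field_simp [hz i]
    linear_combination h2
  rw [Finset.sum_congr rfl hterm, ← Finset.mul_sum] at heval
  rw [eq_div_iff hz1, mul_comm (∑ _ ∈ _, _), heval]

open Polynomial Finset in
private lemma paradiag_sum_id (ℓ : ℕ) (hℓ : 1 ≤ ℓ) (ω : ℂ)
    (hω : ω = Complex.exp (-(2 * Real.pi * Complex.I) / ℓ))
    (x : ℝ) (hx : 0 < x) :
    ∑ i ∈ range ℓ, (ω ^ i / ℓ) / (1 - ω ^ i + (x : ℂ)) =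
      ((((1 + x) ^ ℓ - 1)⁻¹ : ℝ) : ℂ) := by
  have habs : ‖ω‖ = 1 := by
    have h1 : (-(2 * (Real.pi:ℂ) * Complex.I) / (ℓ:ℂ))
        = ((-(2 * Real.pi) / (ℓ:ℝ) : ℝ) : ℂ) * Complex.I := by push_cast; ring
    rw [hω, h1, Complex.norm_exp_ofReal_mul_I]
  have hprim : IsPrimitiveRoot ω ℓ := by
    have h := Complex.isPrimitiveRoot_exp ℓ (by omega)
    have h2 : ω = (Complex.exp (2 * Real.pi * Complex.I / ℓ))⁻¹ := by
      rw [hω, ← Complex.exp_neg]; ring_nf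
    rw [h2]; exact h.inv
  have hprod : ∏ i ∈ range ℓ, (Polynomial.X - Polynomial.C (ω ^ i))
      = Polynomial.X ^ ℓ - 1 := by
    have himg : (range ℓ).image (fun i => ω ^ i) = Polynomial.nthRootsFinset ℓ (1 : ℂ) := by
      apply Finset.eq_of_subset_of_card_le
      · intro y hy
        simp only [Finset.mem_image, Finset.mem_range] at hy
        obtain ⟨i, _, rfl⟩ := hy
        rw [Polynomial.mem_nthRootsFinset (by omega)]
        rw [← pow_mul, mul_comm, pow_mul, hprim.pow_eq_one, one_pow]
      · rw [hprim.card_nthRootsFinset, Finset.card_image_of_injOn, Finset.card_range]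
        intro a ha b hb hab
        exact hprim.pow_inj (Finset.mem_range.mp ha) (Finset.mem_range.mp hb) hab
    rw [Polynomial.X_pow_sub_one_eq_prod (by omega : 0 < ℓ) hprim, ← himg,
      Finset.prod_image]
    intro a ha b hb hab
    exact hprim.pow_inj (Finset.mem_range.mp ha) (Finset.mem_range.mp hb) hab
  set z : ℂ := ((1 + x : ℝ) : ℂ) with hzdef
  have hre : ∀ i : ℕ, (ω ^ i).re ≤ 1 := by
    intro i
    calc (ω ^ i).re ≤ ‖ω ^ i‖ := Complex.re_le_norm _
    _ = 1 := by rw [norm_pow, habs, one_pow]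
  have hz : ∀ i : ℕ, z - ω ^ i ≠ 0 := by
    intro i h
    have : (z - ω ^ i).re = 0 := by rw [h]; rfl
    rw [Complex.sub_re, hzdef, Complex.ofReal_re] at this
    have := hre i
    linarith
  have hpow : (1:ℝ) < (1 + x) ^ ℓ := one_lt_pow₀ (by linarith) (by omega)
  have hz1 : z ^ ℓ - 1 ≠ 0 := by
    rw [hzdef, ← Complex.ofReal_pow, ← Complex.ofReal_one, ← Complex.ofReal_sub]
    exact Complex.ofReal_ne_zero.mpr (by linarith)
  have hsum := paradiag_deriv_sum ℓ ω hprod z hz hz1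
  have hstep : ∑ i ∈ range ℓ, ω ^ i * (z - ω ^ i)⁻¹ = ℓ / (z ^ ℓ - 1) := by
    have hterm : ∀ i ∈ range ℓ, ω ^ i * (z - ω ^ i)⁻¹ = z * (z - ω ^ i)⁻¹ - 1 := by
      intro i _
      field_simp [hz i]
      ring
    rw [Finset.sum_congr rfl hterm, Finset.sum_sub_distrib, ← Finset.mul_sum, hsum,
      Finset.sum_const, Finset.card_range, nsmul_eq_mul, mul_one]
    have hzpow : z * z ^ (ℓ - 1) = z ^ ℓ := by
      rw [← pow_succ']
      congr 1
      omega
    field_simp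
    linear_combination (ℓ:ℂ) * hzpow
  have hℓ0 : (ℓ : ℂ) ≠ 0 := Nat.cast_ne_zero.mpr (by omega)
  have hmain : ∑ i ∈ range ℓ, (ω ^ i / ℓ) / (1 - ω ^ i + (x : ℂ)) = (z ^ ℓ - 1)⁻¹ := by
    have hden : ∀ i : ℕ, (1 : ℂ) - ω ^ i + (x:ℂ) = z - ω ^ i := by
      intro i; rw [hzdef]; push_cast; ring
    calc ∑ i ∈ range ℓ, (ω ^ i / ℓ) / (1 - ω ^ i + (x : ℂ))
        = (ℓ:ℂ)⁻¹ * ∑ i ∈ range ℓ, ω ^ i * (z - ω ^ i)⁻¹ := by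
          rw [Finset.mul_sum]
          apply Finset.sum_congr rfl
          intro i _
          rw [hden i]
          field_simp
      _ = (ℓ:ℂ)⁻¹ * ((ℓ:ℂ) / (z ^ ℓ - 1)) := by rw [hstep]
      _ = (z ^ ℓ - 1)⁻¹ := by field_simp
  rw [hmain, hzdef, ← Complex.ofReal_pow, ← Complex.ofReal_one, ← Complex.ofReal_sub,
    ← Complex.ofReal_inv]

/-- extreme eigenvalues of `J_ℓ`:
`λ_min(J_ℓ) = 1 + ∑ γᵢ/(1-πᵢ+τλ_max(K))` and `λ_max(J_ℓ) = 1 + ∑ γᵢ/(1-πᵢ+τλ_min(K))`. -/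
theorem paradiag_Jl_extreme_eigenvalues
    (nbar ℓ : ℕ) (hn : 0 < nbar) (hℓ : 1 ≤ ℓ)
    (ω : ℂ) (hω : ω = Complex.exp (-(2 * Real.pi * Complex.I) / ℓ))
    (π : Fin ℓ → ℂ) (hπ : ∀ i, π i = ω ^ (i : ℕ))
    (γ : Fin ℓ → ℂ) (hγ : ∀ i, γ i = π i / ℓ)
    (K : Matrix (Fin nbar) (Fin nbar) ℝ) (hK : K.PosDef)
    (τ : ℝ) (hτ : 0 < τ)
    (Kc : Matrix (Fin nbar) (Fin nbar) ℂ) (hKc : Kc = K.map Complex.ofReal)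
    (A : Fin ℓ → Matrix (Fin nbar) (Fin nbar) ℂ)
    (hA : ∀ i, A i = (1 - π i) • (1 : Matrix (Fin nbar) (Fin nbar) ℂ) + (τ : ℂ) • Kc)
    (J : Matrix (Fin nbar) (Fin nbar) ℂ)
    (hJ : J = 1 + ∑ i, γ i • (A i)⁻¹)
    (lminK lmaxK : ℝ)
    (hlmin : lminK = ⨅ a, hK.1.eigenvalues a)
    (hlmax : lmaxK = ⨆ a, hK.1.eigenvalues a) :
    ∃ hJh : J.IsHermitian,
      (((⨅ a, hJh.eigenvalues a : ℝ) : ℂ) =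
        1 + ∑ i, γ i / (1 - π i + ((τ * lmaxK : ℝ) : ℂ))) ∧
      (((⨆ a, hJh.eigenvalues a : ℝ) : ℂ) =
        1 + ∑ i, γ i / (1 - π i + ((τ * lminK : ℝ) : ℂ))) := by

  classical
  haveI : Nonempty (Fin nbar) := ⟨⟨0, hn⟩⟩
  set μ : Fin nbar → ℝ := hK.1.eigenvalues with hμ
  have hμpos : ∀ a, 0 < μ a := fun a => hK.eigenvalues_pos a
  -- the complexified eigenvector unitary
  set U : Matrix (Fin nbar) (Fin nbar) ℝ := (hK.1.eigenvectorUnitary : Matrix (Fin nbar) (Fin nbar) ℝ) with hU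
  set Uc : Matrix (Fin nbar) (Fin nbar) ℂ := U.map Complex.ofReal with hUcdef
  have hmapmul : ∀ (M N : Matrix (Fin nbar) (Fin nbar) ℝ),
      (M * N).map Complex.ofReal = M.map Complex.ofReal * N.map Complex.ofReal := by
    intro M N
    exact Matrix.map_mul (f := Complex.ofRealHom)
  have hstarmap : ∀ (M : Matrix (Fin nbar) (Fin nbar) ℝ),
      (star M).map Complex.ofReal = star (M.map Complex.ofReal) := by
    intro M
    show Mᴴ.map Complex.ofReal = (M.map Complex.ofReal)ᴴ
    exact Matrix.conjTranspose_map Complex.ofReal (fun r => (Complex.conj_ofReal r).symm)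
  have hmapone : (1 : Matrix (Fin nbar) (Fin nbar) ℝ).map Complex.ofReal = 1 :=
    Matrix.map_one _ Complex.ofReal_zero Complex.ofReal_one
  have hU2 := hK.1.eigenvectorUnitary.2
  rw [Unitary.mem_iff] at hU2
  have hsU : star Uc * Uc = 1 := by
    rw [hUcdef, ← hstarmap, ← hmapmul, hU2.1, hmapone]
  have hUs : Uc * star Uc = 1 := by
    rw [hUcdef, ← hstarmap, ← hmapmul, hU2.2, hmapone]
  -- spectral theorem for Kc
  have hKc2 : Kc = Uc * diagonal (fun a => (μ a : ℂ)) * star Uc := by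
    rw [hKc, hK.1.spectral_theorem, Unitary.conjStarAlgAut_apply, hmapmul, hmapmul, hstarmap]
    congr 1
    congr 1
    rw [Matrix.diagonal_map Complex.ofReal_zero]
    congr 1
  set d : Fin ℓ → Fin nbar → ℂ := fun i a => 1 - π i + (τ : ℂ) * (μ a : ℂ) with hd_def
  have habs : ‖ω‖ = 1 := by
    have h1 : (-(2 * (Real.pi:ℂ) * Complex.I) / (ℓ:ℂ))
        = ((-(2 * Real.pi) / (ℓ:ℝ) : ℝ) : ℂ) * Complex.I := by push_cast; ring
    rw [hω, h1, Complex.norm_exp_ofReal_mul_I]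
  have hre : ∀ i : Fin ℓ, (π i).re ≤ 1 := by
    intro i
    rw [hπ i]
    calc (ω ^ (i:ℕ)).re ≤ ‖ω ^ (i:ℕ)‖ := Complex.re_le_norm _
    _ = 1 := by rw [norm_pow, habs, one_pow]
  have hd0 : ∀ i a, d i a ≠ 0 := by
    intro i a h
    have h1 : (d i a).re = 0 := by rw [h]; rfl
    have h2 : (d i a).re = 1 - (π i).re + τ * μ a := by
      simp [hd_def, Complex.add_re, Complex.sub_re, Complex.one_re, Complex.mul_re]
    rw [h2] at h1
    have h3 := hre i
    have h4 := hμpos a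
    nlinarith
  -- conjugation algebra
  have hconj_mul : ∀ v w : Fin nbar → ℂ,
      (Uc * diagonal v * star Uc) * (Uc * diagonal w * star Uc)
        = Uc * diagonal (fun a => v a * w a) * star Uc := by
    intro v w
    calc (Uc * diagonal v * star Uc) * (Uc * diagonal w * star Uc)
        = Uc * diagonal v * (star Uc * Uc) * diagonal w * star Uc := by
          simp only [mul_assoc]
      _ = Uc * (diagonal v * diagonal w) * star Uc := by
          rw [hsU]
          simp only [mul_one, mul_assoc]
      _ = Uc * diagonal (fun a => v a * w a) * star Uc := by
          rw [diagonal_mul_diagonal]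
  have hone : (1 : Matrix (Fin nbar) (Fin nbar) ℂ)
      = Uc * diagonal (fun _ => (1:ℂ)) * star Uc := by
    rw [diagonal_one, mul_one, hUs]
  -- A i as conjugated diagonal
  have hA2 : ∀ i, A i = Uc * diagonal (d i) * star Uc := by
    intro i
    have hdiag : diagonal (d i) = (1 - π i) • diagonal (fun _ : Fin nbar => (1:ℂ))
        + (τ:ℂ) • diagonal (fun a => ((μ a : ℝ) : ℂ)) := by
      ext a b
      by_cases hab : a = b
      · subst hab
        simp [hd_def]
      · simp [Matrix.diagonal_apply_ne _ hab, Matrix.one_apply_ne hab]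
    rw [hA i, hKc2, hone, hdiag]
    simp only [mul_add, add_mul, mul_smul_comm, smul_mul_assoc]
  have hAinv : ∀ i, (A i)⁻¹ = Uc * diagonal (fun a => (d i a)⁻¹) * star Uc := by
    intro i
    apply Matrix.inv_eq_right_inv
    rw [hA2 i, hconj_mul]
    have : (fun a => d i a * (d i a)⁻¹) = fun _ => (1:ℂ) := by
      funext a
      exact mul_inv_cancel₀ (hd0 i a)
    rw [this]
    exact hone.symm
  -- J as conjugated diagonal
  have hJ2 : J = Uc * diagonal (fun a => 1 + ∑ i, γ i * (d i a)⁻¹) * star Uc := by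
    rw [hJ]
    have hsum : ∑ i, γ i • (A i)⁻¹
        = Uc * diagonal (fun a => ∑ i, γ i * (d i a)⁻¹) * star Uc := by
      have h1 : ∀ i : Fin ℓ, γ i • (A i)⁻¹
          = Uc * diagonal (fun a => γ i * (d i a)⁻¹) * star Uc := by
        intro i
        rw [hAinv i, ← smul_mul_assoc, ← mul_smul_comm, ← Matrix.diagonal_smul]
        rfl
      rw [Finset.sum_congr rfl (fun i _ => h1 i), ← Finset.sum_mul, ← Finset.mul_sum]
      congr 2
      ext a b
      by_cases hab : a = b
      · subst hab
        simp [Matrix.sum_apply]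
      · simp [Matrix.sum_apply, Matrix.diagonal_apply_ne _ hab]
    rw [hsum]
    nth_rewrite 1 [hone]
    rw [← add_mul, ← mul_add, ← diagonal_add]
  -- the real diagonal values
  set w : Fin nbar → ℝ := fun a => 1 + ((1 + τ * μ a) ^ ℓ - 1)⁻¹ with hw
  have hentry : ∀ t : ℝ, 0 < t →
      (1 : ℂ) + ∑ i, γ i * ((1 - π i + (τ:ℂ) * (t:ℂ))⁻¹)
        = ((1 + ((1 + τ * t) ^ ℓ - 1)⁻¹ : ℝ) : ℂ) := by
    intro t ht
    have hx : 0 < τ * t := mul_pos hτ ht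
    have hid := paradiag_sum_id ℓ hℓ ω hω (τ * t) hx
    have hfin : ∑ i, γ i * ((1 - π i + (τ:ℂ) * (t:ℂ))⁻¹)
        = ∑ i ∈ Finset.range ℓ, (ω ^ i / ℓ) / (1 - ω ^ i + ((τ * t : ℝ) : ℂ)) := by
      rw [← Fin.sum_univ_eq_sum_range (fun k => (ω ^ k / ℓ) / (1 - ω ^ k + ((τ * t : ℝ) : ℂ))) ℓ]
      apply Finset.sum_congr rfl
      intro i _
      rw [hγ i, hπ i, div_eq_mul_inv]
      push_cast
      ring_nf
    rw [hfin, hid]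
    push_cast
    ring
  have hJ3 : J = Uc * diagonal (fun a => ((w a : ℝ) : ℂ)) * star Uc := by
    have hfun : (fun a => (1:ℂ) + ∑ i, γ i * (d i a)⁻¹) = fun a => ((w a : ℝ) : ℂ) := by
      funext a
      exact hentry (μ a) (hμpos a)
    rw [hJ2, hfun]
  -- Hermitian
  have hJh : J.IsHermitian := by
    rw [hJ3]
    have hdh : (diagonal (fun a => ((w a : ℝ) : ℂ)))ᴴ = diagonal (fun a => ((w a : ℝ) : ℂ)) := by
      rw [diagonal_conjTranspose]
      have hst : (star fun a => ((w a : ℝ) : ℂ)) = fun a => ((w a : ℝ) : ℂ) := by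
        funext a
        exact Complex.conj_ofReal _
      rw [hst]
    show (Uc * diagonal (fun a => ((w a : ℝ) : ℂ)) * star Uc)ᴴ = _
    rw [conjTranspose_mul, conjTranspose_mul, hdh]
    rw [show (star Uc)ᴴ = Uc from by simp [Matrix.star_eq_conjTranspose],
      show Ucᴴ = star Uc from rfl]
    rw [mul_assoc]
  -- spectrum computation
  have hrange : Set.range hJh.eigenvalues = Set.range w := by
    have h1 := hJh.spectrum_real_eq_range_eigenvalues
    have h2 : spectrum ℝ J = Set.range w := by
      let uC : unitary (Matrix (Fin nbar) (Fin nbar) ℂ) := ⟨Uc, Unitary.mem_iff.mpr ⟨hsU, hUs⟩⟩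
      have hJu : J = (uC : Matrix (Fin nbar) (Fin nbar) ℂ)
          * diagonal (fun a => ((w a : ℝ) : ℂ))
          * (star uC : Matrix (Fin nbar) (Fin nbar) ℂ) := hJ3
      rw [hJu, Unitary.spectrum_star_right_conjugate]
      ext x
      rw [Set.mem_range, ← spectrum.algebraMap_mem_iff ℂ, spectrum_diagonal]
      constructor
      · rintro ⟨a, ha⟩
        exact ⟨a, Complex.ofReal_injective ha⟩
      · rintro ⟨a, rfl⟩
        exact ⟨a, rfl⟩
    rw [← h1, h2]
  obtain ⟨amax, hamax⟩ := Finite.exists_max μ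
  obtain ⟨amin, hamin⟩ := Finite.exists_min μ
  have hmaxeq : lmaxK = μ amax := by
    rw [hlmax]
    exact le_antisymm (ciSup_le hamax) (le_ciSup (Set.Finite.bddAbove (Set.finite_range μ)) amax)
  have hmineq : lminK = μ amin := by
    rw [hlmin]
    exact le_antisymm (ciInf_le (Set.Finite.bddBelow (Set.finite_range μ)) amin) (le_ciInf hamin)
  have hkey : ∀ s t : ℝ, 0 < s → s ≤ t →
      1 + ((1 + τ * t) ^ ℓ - 1)⁻¹ ≤ 1 + ((1 + τ * s) ^ ℓ - 1)⁻¹ := by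
    intro s t hs hst
    have h1 : (1:ℝ) < (1 + τ * s) ^ ℓ := one_lt_pow₀ (by nlinarith) (by omega)
    have h2 : (1 + τ * s) ^ ℓ ≤ (1 + τ * t) ^ ℓ := by
      apply pow_le_pow_left₀ (by nlinarith) (by nlinarith)
    have h3 : ((1 + τ * t) ^ ℓ - 1)⁻¹ ≤ ((1 + τ * s) ^ ℓ - 1)⁻¹ :=
      inv_anti₀ (by linarith) (by linarith)
    linarith
  have hbddB : BddBelow (Set.range w) := Set.Finite.bddBelow (Set.finite_range w)
  have hbddA : BddAbove (Set.range w) := Set.Finite.bddAbove (Set.finite_range w)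
  have hImin : (⨅ a, hJh.eigenvalues a) = w amax := by
    have e1 : (⨅ a, hJh.eigenvalues a) = sInf (Set.range hJh.eigenvalues) := rfl
    have e2 : (⨅ a, w a) = sInf (Set.range w) := rfl
    rw [e1, hrange, ← e2]
    refine le_antisymm (ciInf_le hbddB amax) (le_ciInf fun b => ?_)
    exact hkey (μ b) (μ amax) (hμpos b) (hamax b)
  have hImax : (⨆ a, hJh.eigenvalues a) = w amin := by
    have e1 : (⨆ a, hJh.eigenvalues a) = sSup (Set.range hJh.eigenvalues) := rfl
    have e2 : (⨆ a, w a) = sSup (Set.range w) := rfl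
    rw [e1, hrange, ← e2]
    refine le_antisymm (ciSup_le fun b => ?_) (le_ciSup hbddA amin)
    exact hkey (μ amin) (μ b) (hμpos amin) (hamin b)
  have hconv : ∀ x : ℝ, (1:ℂ) + ∑ i, γ i * ((1 - π i + (τ:ℂ) * (x:ℂ))⁻¹)
      = 1 + ∑ i, γ i / (1 - π i + ((τ * x : ℝ) : ℂ)) := by
    intro x
    congr 1
    apply Finset.sum_congr rfl
    intro i _
    rw [div_eq_mul_inv]
    push_cast
    ring_nf
  refine ⟨hJh, ?_, ?_⟩
  · rw [hImin]
    have hp : 0 < lmaxK := hmaxeq ▸ hμpos amax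
    calc ((w amax : ℝ) : ℂ)
        = ((1 + ((1 + τ * lmaxK) ^ ℓ - 1)⁻¹ : ℝ) : ℂ) := by
          simp only [hw]
          rw [← hmaxeq]
      _ = (1:ℂ) + ∑ i, γ i * ((1 - π i + (τ:ℂ) * (lmaxK:ℂ))⁻¹) := (hentry lmaxK hp).symm
      _ = 1 + ∑ i, γ i / (1 - π i + ((τ * lmaxK : ℝ) : ℂ)) := hconv lmaxK
  · rw [hImax]
    have hp : 0 < lminK := hmineq ▸ hμpos amin
    calc ((w amin : ℝ) : ℂ)
        = ((1 + ((1 + τ * lminK) ^ ℓ - 1)⁻¹ : ℝ) : ℂ) := by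
          simp only [hw]
          rw [← hmineq]
      _ = (1:ℂ) + ∑ i, γ i * ((1 - π i + (τ:ℂ) * (lminK:ℂ))⁻¹) := (hentry lminK hp).symm
      _ = 1 + ∑ i, γ i / (1 - π i + ((τ * lminK : ℝ) : ℂ)) := hconv lminK
end

section
/- For every integer ℓ ≥ 1 and every real c > 0, Σ_{k=0}^{ℓ−1} cos(2πk/ℓ)/(1 − cos(2πk/ℓ) + c) ≥ 0; equivalently, with π_i = exp(−2πi(i−1)/ℓ) and w(π_i) = 1/(ℓ·(1 − Re(π_i) + c)), the weighted sum Σ_{i=1}^ℓ Re(π_i)·w(π_i) is nonnegative. -/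
lemma sum_cos_roots_nonneg (ℓ : ℕ) (hℓ : 1 ≤ ℓ) :
    0 ≤ ∑ k ∈ Finset.range ℓ, Real.cos (2 * Real.pi * k / ℓ) := by
  have key : ∑ k ∈ Finset.range ℓ, Real.cos (2 * Real.pi * k / ℓ)
      = (∑ k ∈ Finset.range ℓ, (Complex.exp (2 * Real.pi * Complex.I / ℓ)) ^ k).re := by
    rw [Complex.re_sum]
    refine Finset.sum_congr rfl fun k _ => ?_
    rw [← Complex.exp_nat_mul,
      show (k : ℂ) * (2 * Real.pi * Complex.I / ℓ) =
        ((2 * Real.pi * k / ℓ : ℝ) : ℂ) * Complex.I by push_cast; ring,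
      Complex.exp_ofReal_mul_I_re]
  rw [key]
  rcases eq_or_lt_of_le hℓ with h1 | h2
  · simp [← h1]
  · rw [(Complex.isPrimitiveRoot_exp ℓ (by omega)).geom_sum_eq_zero h2]
    simp

/-- for every `ℓ ≥ 1` and `c > 0`,
`∑_{k=0}^{ℓ-1} cos(2πk/ℓ)/(1 - cos(2πk/ℓ) + c) ≥ 0`; equivalently, the weighted sum
`∑ Re(πᵢ) w(πᵢ)` with `w(πᵢ) = 1/(ℓ(1 - Re(πᵢ) + c))` is nonnegative. -/
theorem weighted_cosine_sum_nonneg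
    (ℓ : ℕ) (hℓ : 1 ≤ ℓ) (c : ℝ) (hc : 0 < c) :
    0 ≤ ∑ k ∈ Finset.range ℓ,
        Real.cos (2 * Real.pi * k / ℓ) / (1 - Real.cos (2 * Real.pi * k / ℓ) + c) ∧
    ∀ π : Fin ℓ → ℂ,
      (∀ i, π i = Complex.exp (-(2 * Real.pi * Complex.I) * (i : ℕ) / ℓ)) →
      0 ≤ ∑ i, (π i).re * (1 / (ℓ * (1 - (π i).re + c))) := by
  have hS := sum_cos_roots_nonneg ℓ hℓ
  have hmain : 0 ≤ ∑ k ∈ Finset.range ℓ,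
      Real.cos (2 * Real.pi * k / ℓ) / (1 - Real.cos (2 * Real.pi * k / ℓ) + c) := by
    have hterm : ∀ k ∈ Finset.range ℓ,
        Real.cos (2 * Real.pi * k / ℓ) / (1 + c) ≤
        Real.cos (2 * Real.pi * k / ℓ) / (1 - Real.cos (2 * Real.pi * k / ℓ) + c) := by
      intro k _
      set x := Real.cos (2 * Real.pi * k / ℓ) with hx
      have hx1 : x ≤ 1 := Real.cos_le_one _
      have hd : 0 < 1 - x + c := by linarith
      rw [div_le_div_iff₀ (by linarith) hd]
      nlinarith [sq_nonneg x]
    calc (0:ℝ) ≤ (∑ k ∈ Finset.range ℓ, Real.cos (2 * Real.pi * k / ℓ)) / (1 + c) :=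
        div_nonneg hS (by linarith)
    _ = ∑ k ∈ Finset.range ℓ, Real.cos (2 * Real.pi * k / ℓ) / (1 + c) := by
        rw [Finset.sum_div]
    _ ≤ _ := Finset.sum_le_sum hterm
  refine ⟨hmain, fun π hπ => ?_⟩
  have hre : ∀ i : Fin ℓ, (π i).re = Real.cos (2 * Real.pi * i / ℓ) := by
    intro i
    rw [hπ i,
      show -(2 * Real.pi * Complex.I) * (i : ℕ) / ℓ =
        ((-(2 * Real.pi * i / ℓ) : ℝ) : ℂ) * Complex.I by push_cast; ring,
      Complex.exp_ofReal_mul_I_re, Real.cos_neg]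
  have heq : ∑ i, (π i).re * (1 / (ℓ * (1 - (π i).re + c)))
      = (∑ k ∈ Finset.range ℓ,
          Real.cos (2 * Real.pi * k / ℓ) / (1 - Real.cos (2 * Real.pi * k / ℓ) + c)) / ℓ := by
    rw [Finset.sum_div, ← Fin.sum_univ_eq_sum_range
      (fun k => Real.cos (2 * Real.pi * k / ℓ) / (1 - Real.cos (2 * Real.pi * k / ℓ) + c) / ℓ)]
    refine Finset.sum_congr rfl fun i _ => ?_
    rw [hre i]
    field_simp
  rw [heq]
  positivity
end
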